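/- arXiv:1307.6809 — 9 statements merged into one kernel-verified Lean document; each statement's English description precedes it below -/
import Mathlib

section
/- Let (f, μ) be a Δ-feasible pair for some Δ > 0. Define f̃ by setting f̃_{ij} = 0 on every non-tight arc (arcs with γ^μ_{ij} < 1) and f̃_{ij} = f_{ij} otherwise. Then f̃ is a feasible generalized flow, μ is a conservative labeling for f̃, and the total relabeled surplus satisfies Ex^μ(f̃) ≤ Ex^μ(f) + |F^μ| Δ, where F^μ is the set of non-tight arcs. -/
/-!
Zeroing the flow on a non-tight arc `a = (i, j)` removes `γ a * f a` from the inflow of `j` and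
`f a` from the outflow of `i`. The inflow lost at `j` is exactly the reserve `R_j`, which
Δ-feasibility keeps below the excess, so every excess stays nonnegative. The gain `f a` at the
tail `i` costs `f a / μ i ≤ Δ` in relabeled surplus, since a non-tight arc is not reversed in the
Δ-fat graph; there are `|F^μ|` such arcs.
-/

/-- Excess of node `i` for flow `f` with gains `γ` and demands `b`. -/
def excess {V : Type*} [Fintype V] [DecidableEq V] (E : Finset (V × V))
    (γ : V × V → ℝ) (b : V → ℝ) (f : V × V → ℝ) (i : V) : ℝ :=
  (∑ a ∈ E.filter (fun a => a.2 = i), γ a * f a)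
    - (∑ a ∈ E.filter (fun a => a.1 = i), f a) - b i

/-- Flow entering `i` on non-tight arcs (arcs `a ∈ E` with `γ a * μ a.1 < μ a.2`,
i.e. relabeled gain `< 1`). -/
noncomputable def reserve {V : Type*} [Fintype V] [DecidableEq V] (E : Finset (V × V))
    (γ : V × V → ℝ) (μ : V → ℝ) (f : V × V → ℝ) (i : V) : ℝ :=
  ∑ a ∈ E.filter (fun a => a.2 = i ∧ γ a * μ a.1 < μ a.2), γ a * f a

lemma Finset.sum_erase_sum_fiber_le {ι α M : Type*} [Fintype ι] [DecidableEq ι]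
    [AddCommMonoid M] [PartialOrder M] [IsOrderedAddMonoid M]
    (s : Finset α) (p : α → ι) (g : α → M) (hg : ∀ a ∈ s, 0 ≤ g a) (t : ι) :
    ∑ i ∈ Finset.univ.erase t, ∑ a ∈ s.filter (fun a => p a = i), g a ≤ ∑ a ∈ s, g a := by
  rw [← Finset.sum_fiberwise s p g]
  exact Finset.sum_le_sum_of_subset_of_nonneg (Finset.erase_subset _ _) fun i _ _ =>
    Finset.sum_nonneg fun a ha => hg a (Finset.mem_filter.mp ha).1

namespace GeneralizedFlow

variable {V : Type*} (E : Finset (V × V)) (γ : V × V → ℝ) (b : V → ℝ) (μ : V → ℝ) (f : V × V → ℝ)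

noncomputable def nontightArcs : Finset (V × V) :=
  E.filter (fun a => γ a * μ a.1 < μ a.2)

noncomputable def truncate (a : V × V) : ℝ :=
  if γ a * μ a.1 < μ a.2 then 0 else f a

lemma tight_of_truncate_pos {a : V × V} (h : 0 < truncate γ μ f a) :
    ¬ γ a * μ a.1 < μ a.2 := by
  intro hlt
  simp [truncate, hlt] at h

lemma sum_relabeled_nontight_le (Δ : ℝ)
    (hfat : ∀ a ∈ E, Δ < f a / μ a.1 → μ a.2 ≤ γ a * μ a.1) :
    ∑ a ∈ nontightArcs E γ μ, f a / μ a.1 ≤ (nontightArcs E γ μ).card * Δ := by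
  rw [← nsmul_eq_mul, ← Finset.sum_const]
  refine Finset.sum_le_sum fun a ha => ?_
  obtain ⟨haE, hlt⟩ := Finset.mem_filter.mp ha
  exact not_lt.mp fun h => (hfat a haE h).not_gt hlt

variable [Fintype V] [DecidableEq V]

lemma excess_truncate (i : V) :
    excess E γ b (truncate γ μ f) i = excess E γ b f i - reserve E γ μ f i
      + ∑ a ∈ (nontightArcs E γ μ).filter (fun a => a.1 = i), f a := by
  have htrunc : ∀ a, truncate γ μ f a = f a - if γ a * μ a.1 < μ a.2 then f a else 0 := by
    intro a
    unfold truncate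
    split_ifs <;> simp
  simp only [excess, reserve, nontightArcs, htrunc, mul_sub, Finset.sum_sub_distrib, mul_ite,
    mul_zero, ← Finset.sum_filter, Finset.filter_filter, and_comm]
  ring

lemma reserve_nonneg (hγ : ∀ a ∈ E, 0 < γ a) (hf0 : ∀ a, 0 ≤ f a) (i : V) :
    0 ≤ reserve E γ μ f i :=
  Finset.sum_nonneg fun a ha => mul_nonneg (hγ a (Finset.mem_filter.mp ha).1).le (hf0 a)

lemma excess_sub_reserve_le_excess_truncate (hf0 : ∀ a, 0 ≤ f a) (i : V) :
    excess E γ b f i - reserve E γ μ f i ≤ excess E γ b (truncate γ μ f) i := by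
  rw [excess_truncate]
  exact le_add_of_nonneg_right (Finset.sum_nonneg fun a _ => hf0 a)

lemma excess_truncate_div_le (hγ : ∀ a ∈ E, 0 < γ a) (hf0 : ∀ a, 0 ≤ f a) {i : V}
    (hμi : 0 < μ i) :
    excess E γ b (truncate γ μ f) i / μ i ≤ excess E γ b f i / μ i
      + ∑ a ∈ (nontightArcs E γ μ).filter (fun a => a.1 = i), f a / μ a.1 := by
  have hsum : ∑ a ∈ (nontightArcs E γ μ).filter (fun a => a.1 = i), f a / μ a.1
      = (∑ a ∈ (nontightArcs E γ μ).filter (fun a => a.1 = i), f a) / μ i := by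
    rw [Finset.sum_div]
    exact Finset.sum_congr rfl fun a ha => by rw [(Finset.mem_filter.mp ha).2]
  rw [hsum, ← add_div, excess_truncate]
  gcongr
  linarith [reserve_nonneg E γ μ f hγ hf0 i]

end GeneralizedFlow

open GeneralizedFlow in
theorem zero_nontight_conservative_general {V : Type*} [Fintype V] [DecidableEq V]
    (E : Finset (V × V)) (γ : V × V → ℝ) (b : V → ℝ) (t : V)
    (f : V × V → ℝ) (μ : V → ℝ) (Δ : ℝ)
    (hγ : ∀ a ∈ E, 0 < γ a)
    (hf0 : ∀ a, 0 ≤ f a)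
    -- Δ-feasibility of (f, μ):
    (hμt : μ t = 1) (hμpos : ∀ i, i ≠ t → 0 < μ i)
    (hdual : ∀ a ∈ E, γ a * μ a.1 ≤ μ a.2)
    (hfat : ∀ a ∈ E, Δ < f a / μ a.1 → μ a.2 ≤ γ a * μ a.1)
    (hres : ∀ i, i ≠ t → reserve E γ μ f i ≤ excess E γ b f i)
    -- the truncated flow f̃
    (ft : V × V → ℝ)
    (hft : ∀ a, ft a = if γ a * μ a.1 < μ a.2 then 0 else f a) :
    (∀ i, i ≠ t → 0 ≤ excess E γ b ft i) ∧
    (∀ a ∈ E, γ a * μ a.1 ≤ μ a.2 ∧ (0 < ft a → γ a * μ a.1 = μ a.2)) ∧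
    (∑ i ∈ Finset.univ.erase t, excess E γ b ft i / μ i)
      ≤ (∑ i ∈ Finset.univ.erase t, excess E γ b f i / μ i)
        + ((E.filter (fun a => γ a * μ a.1 < μ a.2)).card : ℝ) * Δ := by
  obtain rfl : ft = truncate γ μ f := funext hft
  have hμ : ∀ i, 0 < μ i := fun i => by
    rcases eq_or_ne i t with rfl | hi
    exacts [hμt ▸ one_pos, hμpos i hi]
  refine ⟨fun i hi => ?_, fun a ha => ⟨hdual a ha, fun hpos => ?_⟩, ?_⟩
  · linarith [hres i hi, excess_sub_reserve_le_excess_truncate E γ b μ f hf0 i]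
  · exact (hdual a ha).eq_of_not_lt (tight_of_truncate_pos γ μ f hpos)
  · calc ∑ i ∈ Finset.univ.erase t, excess E γ b (truncate γ μ f) i / μ i
        ≤ ∑ i ∈ Finset.univ.erase t, (excess E γ b f i / μ i
            + ∑ a ∈ (nontightArcs E γ μ).filter (fun a => a.1 = i), f a / μ a.1) :=
          Finset.sum_le_sum fun i _ => excess_truncate_div_le E γ b μ f hγ hf0 (hμ i)
      _ ≤ ∑ i ∈ Finset.univ.erase t, excess E γ b f i / μ i
            + ∑ a ∈ nontightArcs E γ μ, f a / μ a.1 := by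
          rw [Finset.sum_add_distrib]
          gcongr
          exact Finset.sum_erase_sum_fiber_le _ Prod.fst _
            (fun a _ => div_nonneg (hf0 a) (hμ a.1).le) t
      _ ≤ _ := by
          gcongr
          exact sum_relabeled_nontight_le E γ μ f Δ hfat

/-- from a Δ-feasible pair (f,μ), zeroing the flow on all non-tight
arcs yields a feasible generalized flow f̃ for which μ is conservative, and
Ex^μ(f̃) ≤ Ex^μ(f) + |F^μ|·Δ. -/
theorem zero_nontight_conservative {V : Type*} [Fintype V] [DecidableEq V]
    (E : Finset (V × V)) (γ : V × V → ℝ) (b : V → ℝ) (t : V)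
    (f : V × V → ℝ) (μ : V → ℝ) (Δ : ℝ) (hΔ : 0 < Δ)
    (hγ : ∀ a ∈ E, 0 < γ a)
    (hf0 : ∀ a, 0 ≤ f a) (hfE : ∀ a ∉ E, f a = 0)
    -- Δ-feasibility of (f, μ):
    (hμt : μ t = 1) (hμpos : ∀ i, i ≠ t → 0 < μ i)
    (hdual : ∀ a ∈ E, γ a * μ a.1 ≤ μ a.2)
    (hfat : ∀ a ∈ E, Δ < f a / μ a.1 → μ a.2 ≤ γ a * μ a.1)
    (hres : ∀ i, i ≠ t → reserve E γ μ f i ≤ excess E γ b f i)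
    -- the truncated flow f̃
    (ft : V × V → ℝ)
    (hft : ∀ a, ft a = if γ a * μ a.1 < μ a.2 then 0 else f a) :
    (∀ i, i ≠ t → 0 ≤ excess E γ b ft i) ∧
    (∀ a ∈ E, γ a * μ a.1 ≤ μ a.2 ∧ (0 < ft a → γ a * μ a.1 = μ a.2)) ∧
    (∑ i ∈ Finset.univ.erase t, excess E γ b ft i / μ i)
      ≤ (∑ i ∈ Finset.univ.erase t, excess E γ b f i / μ i)
        + ((E.filter (fun a => γ a * μ a.1 < μ a.2)).card : ℝ) * Δ :=
  zero_nontight_conservative_general E γ b t f μ Δ hγ hf0 hμt hμpos hdual hfat hres ft hft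
end

section
/- Consider a feasible instance of the uncapacitated generalized flow maximization problem. The objective is bounded if and only if there is no directed cycle C ⊆ E with ∏_{e∈C} γ_e > 1 together with a directed path P ⊆ E from a node of C to the sink t. -/
/-!
If a cycle of gain `G > 1` passes through a node `v` from which `t` is reachable, one unit sent
around the cycle leaves a surplus `G - 1` at `v`, and forwarding it to `t` gives a nonnegative flow
whose only nonzero excess is a positive amount at `t`. Adding large multiples of it to a feasible
flow makes the objective unbounded.

Conversely, without such a cycle, cutting closed subwalks out of a walk to `t` never decreases
its gain, so the potential `μ i`, the largest gain of a simple walk from `i` to `t` (or `0` if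
there is none), satisfies `μ t = 1` and `γ (i, j) * μ j ≤ μ i`; these are the reciprocals of the
dual labels, with `0` in the role of `∞`. Weighting the excesses by `μ` (weak duality) bounds the
objective by `-∑ i, μ i * b i`.
-/

namespace GeneralizedFlow

variable {V : Type*}

section Walks

def edges (l : List V) : List (V × V) := l.zip l.tail

@[simp] lemma edges_singleton (a : V) : edges [a] = [] := rfl

@[simp] lemma edges_cons_cons (a b : V) (l : List V) :
    edges (a :: b :: l) = (a, b) :: edges (b :: l) := rfl

lemma edges_append_cons (p : List V) (v : V) (q : List V) :
    edges (p ++ v :: q) = edges (p ++ [v]) ++ edges (v :: q) := by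
  induction p with
  | nil => rfl
  | cons a p ih => cases p <;> simp_all

lemma zip_rotate_one (a : V) (l : List V) :
    (a :: l).zip ((a :: l).rotate 1) = edges (a :: l ++ [a]) := by
  rw [List.rotate_cons_succ, List.rotate_zero, edges, List.cons_append, List.tail_cons,
    ← List.cons_append]
  -- `zip` stops at the shorter list, so the trailing `a` on the left is dropped
  nth_rw 2 [← List.append_nil (l ++ [a])]
  rw [List.zip_append (by simp), List.zip_nil_right, List.append_nil]

variable {E : Finset (V × V)}

def IsWalk (E : Finset (V × V)) (l : List V) : Prop := ∀ a ∈ edges l, a ∈ E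

@[simp] lemma isWalk_singleton (a : V) : IsWalk E [a] := by simp [IsWalk]

lemma isWalk_cons_cons {a b : V} {l : List V} :
    IsWalk E (a :: b :: l) ↔ (a, b) ∈ E ∧ IsWalk E (b :: l) := by
  simp [IsWalk]

lemma isWalk_append_cons {p : List V} {v : V} {q : List V} :
    IsWalk E (p ++ v :: q) ↔ IsWalk E (p ++ [v]) ∧ IsWalk E (v :: q) := by
  rw [IsWalk, edges_append_cons]
  simp only [List.mem_append, or_imp, forall_and]
  rfl

variable {M : Type*} [Monoid M]

def gain (γ : V × V → M) (l : List V) : M := ((edges l).map γ).prod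

variable (γ : V × V → M)

@[simp] lemma gain_singleton (a : V) : gain γ [a] = 1 := rfl

lemma gain_cons_cons (a b : V) (l : List V) :
    gain γ (a :: b :: l) = γ (a, b) * gain γ (b :: l) := by
  simp [gain]

lemma gain_append_cons (p : List V) (v : V) (q : List V) :
    gain γ (p ++ v :: q) = gain γ (p ++ [v]) * gain γ (v :: q) := by
  rw [gain, edges_append_cons, List.map_append, List.prod_append]
  rfl

lemma gain_pos {γ : V × V → ℝ} (hγ : ∀ a ∈ E, 0 < γ a) {l : List V} (hl : IsWalk E l) :
    0 < gain γ l :=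
  List.prod_pos fun _ hx => by
    obtain ⟨a, ha, rfl⟩ := List.mem_map.1 hx
    exact hγ a (hl a ha)

end Walks

section Cycles

def GainCycleReaches (E : Finset (V × V)) (γ : V × V → ℝ) (t : V) : Prop :=
  ∃ (v : V) (c p : List V), IsWalk E (v :: c ++ [v]) ∧ 1 < gain γ (v :: c ++ [v]) ∧
    IsWalk E (v :: p) ∧ (v :: p).getLast? = some t

variable {E : Finset (V × V)} {γ : V × V → ℝ} {t : V}

/-- For `←`, the walk to `t` is taken to start at the first vertex `u` of the cycle: it follows
the cycle from `u` to `v` and then the path. -/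
lemma gainCycleReaches_iff :
    GainCycleReaches E γ t ↔ ∃ (vs us : List V) (v : V),
        vs ≠ [] ∧
        (∀ a ∈ vs.zip (vs.rotate 1), a ∈ E) ∧
        1 < ((vs.zip (vs.rotate 1)).map γ).prod ∧
        v ∈ vs ∧
        us.head? = some v ∧ us.getLast? = some t ∧
        (∀ a ∈ us.zip us.tail, a ∈ E) := by
  constructor
  · rintro ⟨v, c, p, hc, hcγ, hp, hpt⟩
    refine ⟨v :: c, v :: p, v, List.cons_ne_nil v c, ?_, ?_, List.mem_cons_self, rfl, hpt, hp⟩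
    · rwa [zip_rotate_one]
    · rwa [zip_rotate_one]
  · rintro ⟨vs, us, v, hvs, hvsE, hvsγ, hv, hush, hust, husE⟩
    obtain ⟨u, c, rfl⟩ := List.exists_cons_of_ne_nil hvs
    rw [zip_rotate_one] at hvsE hvsγ
    obtain ⟨s, r, hsr⟩ := List.append_of_mem hv
    obtain ⟨us, rfl⟩ := List.head?_eq_some_iff.1 hush
    obtain ⟨p, hp⟩ : ∃ p, s ++ v :: us = u :: p := by
      have h := congrArg List.head? hsr
      simp only [List.head?_append, List.head?_cons] at h
      exact List.head?_eq_some_iff.1 (by simp only [List.head?_append, List.head?_cons, ← h])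
    have hprefix : IsWalk E (s ++ [v]) := by
      have hcyc : IsWalk E (u :: c ++ [u]) := hvsE
      rw [hsr, List.append_assoc, List.cons_append, isWalk_append_cons] at hcyc
      exact hcyc.1
    refine ⟨u, c, p, hvsE, hvsγ, ?_, ?_⟩
    · rw [← hp, isWalk_append_cons]
      exact ⟨hprefix, husE⟩
    · rwa [← hp, List.getLast?_append_cons]

end Cycles

section Potential

variable {E : Finset (V × V)} {γ : V × V → ℝ} {t : V}

/-- Cutting a closed subwalk out of a walk to `t` does not decrease its gain, since the
subwalk is a cycle reaching `t` through the rest of the walk. -/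
theorem exists_nodup_walk_gain_le (hγ : ∀ a ∈ E, 0 < γ a) (hno : ¬ GainCycleReaches E γ t) :
    ∀ {l : List V}, IsWalk E l → l.getLast? = some t →
      ∃ l', l'.Nodup ∧ IsWalk E l' ∧ l'.head? = l.head? ∧ l'.getLast? = some t ∧
        gain γ l ≤ gain γ l'
  | [], _, ht => by simp at ht
  | [a], hw, ht => ⟨[a], List.nodup_singleton a, hw, rfl, ht, le_rfl⟩
  | a :: b :: l, hw, ht => by
    rw [isWalk_cons_cons] at hw
    obtain ⟨m, hm, hmw, hmh, hmt, hlm⟩ :=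
      exists_nodup_walk_gain_le hγ hno hw.2 (by rwa [List.getLast?_cons_cons] at ht)
    obtain ⟨m, rfl⟩ := List.head?_eq_some_iff.1 hmh
    have hwalk : IsWalk E (a :: b :: m) := isWalk_cons_cons.2 ⟨hw.1, hmw⟩
    have hgain : gain γ (a :: b :: l) ≤ gain γ (a :: b :: m) := by
      rw [gain_cons_cons, gain_cons_cons]
      exact mul_le_mul_of_nonneg_left hlm (hγ _ hw.1).le
    by_cases ha : a ∈ b :: m
    · obtain ⟨s, r, hsr⟩ := List.append_of_mem ha
      rw [hsr] at hm hmt hwalk hgain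
      obtain ⟨hcyc, hr⟩ := (isWalk_append_cons (p := a :: s)).1 hwalk
      have hrt : (a :: r).getLast? = some t := by rwa [List.getLast?_append_cons] at hmt
      have hcyc_le : gain γ (a :: s ++ [a]) ≤ 1 :=
        not_lt.1 fun hlt => hno ⟨a, s, r, hcyc, hlt, hr, hrt⟩
      refine ⟨a :: r, hm.sublist (List.sublist_append_right s _), hr, rfl, hrt, ?_⟩
      calc gain γ (a :: b :: l) ≤ gain γ (a :: s ++ a :: r) := hgain
        _ = gain γ (a :: s ++ [a]) * gain γ (a :: r) := gain_append_cons γ (a :: s) a r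
        _ ≤ gain γ (a :: r) := mul_le_of_le_one_left (gain_pos hγ hr).le hcyc_le
    · refine ⟨a :: b :: m, List.nodup_cons.2 ⟨ha, hm⟩, hwalk, rfl, ?_, hgain⟩
      rwa [List.getLast?_cons_cons]

variable [Fintype V] [DecidableEq V]

instance : DecidablePred (IsWalk E) :=
  fun l => inferInstanceAs (Decidable (∀ a ∈ edges l, a ∈ E))

variable (E γ t) in
noncomputable def potential (i : V) : ℝ :=
  ((Finset.univ : Finset {l : List V // l.Nodup}).filter fun l =>
      IsWalk E l.1 ∧ l.1.head? = some i ∧ l.1.getLast? = some t).fold max 0 (gain γ ·.1)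

lemma potential_nonneg (i : V) : 0 ≤ potential E γ t i :=
  (Finset.le_fold_max _).2 (Or.inl le_rfl)

lemma potential_le {i : V} {C : ℝ} (hC : 0 ≤ C)
    (h : ∀ l : List V, l.Nodup → IsWalk E l → l.head? = some i → l.getLast? = some t →
      gain γ l ≤ C) :
    potential E γ t i ≤ C :=
  (Finset.fold_max_le _).2 ⟨hC, fun l hl => by
    obtain ⟨hw, hh, ht⟩ := (Finset.mem_filter.1 hl).2
    exact h l.1 l.2 hw hh ht⟩

lemma gain_le_potential (hγ : ∀ a ∈ E, 0 < γ a) (hno : ¬ GainCycleReaches E γ t)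
    {l : List V} {i : V} (hw : IsWalk E l) (hi : l.head? = some i) (ht : l.getLast? = some t) :
    gain γ l ≤ potential E γ t i := by
  obtain ⟨l', hnd, hw', hi', ht', hle⟩ := exists_nodup_walk_gain_le hγ hno hw ht
  refine hle.trans ((Finset.le_fold_max _).2 (Or.inr ⟨⟨l', hnd⟩, ?_, le_rfl⟩))
  exact Finset.mem_filter.2 ⟨Finset.mem_univ _, hw', hi'.trans hi, ht'⟩

lemma potential_sink (hγ : ∀ a ∈ E, 0 < γ a) (hno : ¬ GainCycleReaches E γ t) :
    potential E γ t t = 1 := by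
  refine le_antisymm (potential_le zero_le_one fun l hnd _ hh ht => ?_)
    (gain_le_potential hγ hno (isWalk_singleton t) rfl rfl)
  obtain ⟨l, rfl⟩ := List.head?_eq_some_iff.1 hh
  cases l with
  | nil => exact le_rfl
  | cons a l =>
    rw [List.getLast?_cons_cons] at ht
    exact absurd (List.mem_of_getLast? ht) (List.nodup_cons.1 hnd).1

lemma mul_potential_le (hγ : ∀ a ∈ E, 0 < γ a) (hno : ¬ GainCycleReaches E γ t)
    {a : V × V} (ha : a ∈ E) : γ a * potential E γ t a.2 ≤ potential E γ t a.1 := by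
  rw [← le_div_iff₀' (hγ a ha)]
  refine potential_le (div_nonneg (potential_nonneg _) (hγ a ha).le) fun l _ hw hh ht => ?_
  obtain ⟨l, rfl⟩ := List.head?_eq_some_iff.1 hh
  rw [le_div_iff₀' (hγ a ha), ← gain_cons_cons]
  exact gain_le_potential hγ hno (isWalk_cons_cons.2 ⟨ha, hw⟩) rfl
    (by rwa [List.getLast?_cons_cons])

end Potential

section Duality

variable [Fintype V] [DecidableEq V] {E : Finset (V × V)} {γ : V × V → ℝ} {b : V → ℝ} {t : V}

lemma sum_mul_sum_filter_eq {α : Type*} (s : Finset α) (p : α → V) (μ : V → ℝ) (h : α → ℝ) :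
    ∑ i, μ i * ∑ a ∈ s.filter (fun a => p a = i), h a = ∑ a ∈ s, μ (p a) * h a := by
  rw [← Finset.sum_fiberwise s p]
  refine Finset.sum_congr rfl fun i _ => ?_
  rw [Finset.mul_sum]
  exact Finset.sum_congr rfl fun a ha => by rw [(Finset.mem_filter.1 ha).2]

lemma sum_mul_excess (μ : V → ℝ) (f : V × V → ℝ) :
    ∑ i, μ i * excess E γ b f i
      = ∑ a ∈ E, (γ a * μ a.2 - μ a.1) * f a - ∑ i, μ i * b i := by
  simp only [excess, mul_sub, Finset.sum_sub_distrib, sum_mul_sum_filter_eq]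
  rw [← Finset.sum_sub_distrib]
  congr 1
  exact Finset.sum_congr rfl fun a _ => by ring

theorem excess_sink_le_of_potential {μ : V → ℝ} (hμ : ∀ i, 0 ≤ μ i) (hμt : μ t = 1)
    (hμE : ∀ a ∈ E, γ a * μ a.2 ≤ μ a.1) {f : V × V → ℝ} (hf : ∀ a, 0 ≤ f a)
    (hex : ∀ i, i ≠ t → 0 ≤ excess E γ b f i) :
    excess E γ b f t ≤ -∑ i, μ i * b i := by
  have hrest : 0 ≤ ∑ i ∈ Finset.univ.erase t, μ i * excess E γ b f i :=
    Finset.sum_nonneg fun i hi => mul_nonneg (hμ i) (hex i (Finset.ne_of_mem_erase hi))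
  have hE : ∑ a ∈ E, (γ a * μ a.2 - μ a.1) * f a ≤ 0 :=
    Finset.sum_nonpos fun a ha => mul_nonpos_of_nonpos_of_nonneg (sub_nonpos.2 (hμE a ha)) (hf a)
  have hsum := sum_mul_excess (E := E) (γ := γ) (b := b) μ f
  rw [← Finset.add_sum_erase _ _ (Finset.mem_univ t), hμt, one_mul] at hsum
  linarith

end Duality

section Flows

variable [DecidableEq V] {E : Finset (V × V)} {γ : V × V → ℝ}

variable (γ) in
noncomputable def walkFlow : List V → ℝ → V × V → ℝ
  | a :: b :: l, w => Pi.single (a, b) w + walkFlow (b :: l) (γ (a, b) * w)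
  | _, _ => 0

lemma walkFlow_nonneg (hγ : ∀ a ∈ E, 0 < γ a) :
    ∀ {l : List V} {w : ℝ}, IsWalk E l → 0 ≤ w → 0 ≤ walkFlow γ l w
  | [], _, _, _ | [_], _, _, _ => le_rfl
  | a :: b :: l, w, hl, hw => by
    rw [isWalk_cons_cons] at hl
    exact add_nonneg (Pi.single_nonneg.2 hw)
      (walkFlow_nonneg hγ hl.2 (mul_nonneg (hγ _ hl.1).le hw))

variable [Fintype V] {b : V → ℝ}

lemma excess_add_smul (f g : V × V → ℝ) (c : ℝ) (i : V) :
    excess E γ b (f + c • g) i = excess E γ b f i + c * excess E γ 0 g i := by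
  simp only [excess, Pi.add_apply, Pi.smul_apply, smul_eq_mul, Pi.zero_apply, mul_add,
    Finset.sum_add_distrib]
  simp only [mul_left_comm _ c, ← Finset.mul_sum]
  ring

lemma excess_zero_add (f g : V × V → ℝ) :
    excess E γ 0 (f + g) = excess E γ 0 f + excess E γ 0 g := by
  funext i
  simpa using excess_add_smul (b := 0) f g 1 i

lemma excess_zero_single {e : V × V} (he : e ∈ E) (w : ℝ) :
    excess E γ 0 (Pi.single e w) = Pi.single e.2 (γ e * w) - Pi.single e.1 w := by
  funext i
  simp [excess, Pi.single_apply, he, eq_comm]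

lemma excess_walkFlow :
    ∀ {l : List V} {u v : V} {w : ℝ}, IsWalk E l → l.head? = some u → l.getLast? = some v →
      excess E γ 0 (walkFlow γ l w) = Pi.single v (gain γ l * w) - Pi.single u w
  | [], _, _, _, _, hu, _ => by simp at hu
  | [a], u, v, w, _, hu, hv => by
    obtain rfl : a = u := by simpa using hu
    obtain rfl : a = v := by simpa using hv
    funext i
    simp [walkFlow, excess]
  | a :: b :: l, u, v, w, hl, hu, hv => by
    obtain rfl : a = u := by simpa using hu
    rw [isWalk_cons_cons] at hl
    rw [List.getLast?_cons_cons] at hv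
    rw [walkFlow, excess_zero_add, excess_zero_single hl.1, excess_walkFlow hl.2 rfl hv,
      show gain γ (b :: l) * (γ (a, b) * w) = gain γ (a :: b :: l) * w by
        rw [gain_cons_cons]; ring]
    abel

theorem exists_flow_excess_eq_single_sink (hγ : ∀ a ∈ E, 0 < γ a) {t : V}
    (h : GainCycleReaches E γ t) :
    ∃ g : V × V → ℝ, (∀ a, 0 ≤ g a) ∧ ∃ c, 0 < c ∧ excess E γ 0 g = Pi.single t c := by
  obtain ⟨v, c, p, hc, hcγ, hp, hpt⟩ := h
  set G := gain γ (v :: c ++ [v])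
  refine ⟨walkFlow γ (v :: c ++ [v]) 1 + walkFlow γ (v :: p) (G - 1),
    add_nonneg (walkFlow_nonneg hγ hc zero_le_one) (walkFlow_nonneg hγ hp (sub_nonneg.2 hcγ.le)),
    (G - 1) * gain γ (v :: p), mul_pos (sub_pos.2 hcγ) (gain_pos hγ hp), ?_⟩
  rw [excess_zero_add, excess_walkFlow hc rfl List.getLast?_concat, excess_walkFlow hp rfl hpt]
  funext i
  simp only [Pi.add_apply, Pi.sub_apply, Pi.single_apply]
  split_ifs <;> ring

theorem exists_feasible_excess_sink_gt {t : V} {f₀ g : V × V → ℝ} {c : ℝ}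
    (hf₀ : ∀ a, 0 ≤ f₀ a) (hex₀ : ∀ i, i ≠ t → 0 ≤ excess E γ b f₀ i)
    (hg : ∀ a, 0 ≤ g a) (hc : 0 < c) (hgc : excess E γ 0 g = Pi.single t c) (M : ℝ) :
    ∃ f : V × V → ℝ, (∀ a, 0 ≤ f a) ∧ (∀ i, i ≠ t → 0 ≤ excess E γ b f i) ∧
      M < excess E γ b f t := by
  set s := (|M - excess E γ b f₀ t| + 1) / c
  have hs : 0 ≤ s := by positivity
  refine ⟨f₀ + s • g, fun a => add_nonneg (hf₀ a) (smul_nonneg hs (hg a)), fun i hi => ?_, ?_⟩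
  · rw [excess_add_smul, hgc, Pi.single_eq_of_ne hi, mul_zero, add_zero]
    exact hex₀ i hi
  · rw [excess_add_smul, hgc, Pi.single_eq_same, div_mul_cancel₀ _ hc.ne']
    linarith [le_abs_self (M - excess E γ b f₀ t)]

end Flows

end GeneralizedFlow

open GeneralizedFlow

/-- for a feasible instance of the uncapacitated generalized flow
maximization problem, the objective is bounded iff there is no directed cycle of
gain > 1 together with a directed path from a node of the cycle to the sink t. -/
theorem bounded_iff_no_gain_cycle_reaching_sink {V : Type*} [Fintype V] [DecidableEq V]
    (E : Finset (V × V)) (γ : V × V → ℝ) (b : V → ℝ) (t : V)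
    (hγ : ∀ a ∈ E, 0 < γ a)
    (hfeas : ∃ f : V × V → ℝ, (∀ a, 0 ≤ f a) ∧ ∀ i, i ≠ t → 0 ≤ excess E γ b f i) :
    (∃ M : ℝ, ∀ f : V × V → ℝ, (∀ a, 0 ≤ f a) →
        (∀ i, i ≠ t → 0 ≤ excess E γ b f i) → excess E γ b f t ≤ M)
    ↔ ¬ ∃ (vs us : List V) (v : V),
        vs ≠ [] ∧
        (∀ a ∈ vs.zip (vs.rotate 1), a ∈ E) ∧
        1 < ((vs.zip (vs.rotate 1)).map γ).prod ∧
        v ∈ vs ∧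
        us.head? = some v ∧ us.getLast? = some t ∧
        (∀ a ∈ us.zip us.tail, a ∈ E) := by
  rw [← gainCycleReaches_iff]
  constructor
  · rintro ⟨M, hM⟩ hcyc
    obtain ⟨f₀, hf₀, hex₀⟩ := hfeas
    obtain ⟨g, hg, c, hc, hgc⟩ := exists_flow_excess_eq_single_sink hγ hcyc
    obtain ⟨f, hf, hex, hMf⟩ := exists_feasible_excess_sink_gt hf₀ hex₀ hg hc hgc M
    exact (hM f hf hex).not_gt hMf
  · intro hno
    exact ⟨_, fun f hf hex => excess_sink_le_of_potential (potential_nonneg (E := E) (γ := γ))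
      (potential_sink hγ hno) (fun a ha => mul_potential_le hγ hno ha) hf hex⟩
end

section
/- Let f̃ and f* be two generalized flows (with respect to the same demands) such that f̃ admits a conservative labeling μ and f* admits a conservative labeling μ*. Define h on the residual arc set by h_{ij} = f*_{ij} − f̃_{ij} when ij ∈ E and f*_{ij} > f̃_{ij}, and h_{ij} = γ_{ji}(f*_{ji} − f̃_{ji}) when ji ∈ E and f*_{ji} > f̃_{ji}, and suppose f* is chosen among optimal solutions minimizing ‖f̃ − f*‖₁. Then the support H of h contains no directed cycle. -/
open Filter Topology Finset

theorem exists_pos_mul_abs_le {ι : Type*} [Finite ι] (h d : ι → ℝ)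
    (hd : ∀ a, d a = 0 → h a = 0) : ∃ ε > 0, ∀ a, ε * |h a| ≤ |d a| := by
  have hev : ∀ a, ∀ᶠ ε in 𝓝[>] (0 : ℝ), ε * |h a| ≤ |d a| := by
    intro a
    rcases eq_or_ne (d a) 0 with hda | hda
    · exact Eventually.of_forall fun ε => by simp [hd a hda]
    · have hlim : Tendsto (fun ε : ℝ => ε * |h a|) (𝓝[>] 0) (𝓝 0) := by
        simpa using ((continuous_mul_const |h a|).tendsto 0).mono_left nhdsWithin_le_nhds
      exact (hlim.eventually_lt_const (abs_pos.2 hda)).mono fun _ => le_of_lt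
  exact ((eventually_all.2 hev).and self_mem_nhdsWithin).exists.imp
    fun ε ⟨hle, hpos⟩ => ⟨hpos, hle⟩

theorem min_le_add_of_mul_nonneg {a b x : ℝ} (hx : 0 ≤ x * (b - a)) (hle : |x| ≤ |b - a|) :
    min a b ≤ a + x := by
  rcases le_total 0 x with h0 | h0
  · exact (min_le_left a b).trans (le_add_of_nonneg_right h0)
  rcases le_total 0 (b - a) with h1 | h1
  · obtain rfl : x = 0 := by rw [abs_of_nonpos h0, abs_of_nonneg h1] at hle; nlinarith
    simp
  · rw [abs_of_nonpos h0, abs_of_nonpos h1] at hle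
    exact (min_le_right a b).trans (by linarith)

theorem abs_sub_add_of_mul_nonneg {a b x : ℝ} (hx : 0 ≤ x * (b - a)) (hle : |x| ≤ |b - a|) :
    |b - (a + x)| = |b - a| - |x| := by
  rcases le_total 0 x with h0 | h0 <;> rcases le_total 0 (b - a) with h1 | h1
  · rw [abs_of_nonneg h0, abs_of_nonneg h1] at *
    rw [abs_of_nonneg (by linarith)]; ring
  · obtain rfl : x = 0 := by rw [abs_of_nonneg h0, abs_of_nonpos h1] at hle; nlinarith
    simp
  · obtain rfl : x = 0 := by rw [abs_of_nonpos h0, abs_of_nonneg h1] at hle; nlinarith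
    simp
  · rw [abs_of_nonpos h0, abs_of_nonpos h1] at *
    rw [abs_of_nonpos (by linarith)]; ring

theorem apply_succ_eq_of_le_succ {u : ℕ → ℝ} {n : ℕ} (hle : ∀ k < n, u k ≤ u (k + 1))
    (hu : u n = u 0) : ∀ k < n, u (k + 1) = u k := by
  have htel := Finset.sum_range_sub u n
  rw [hu, sub_self, sum_eq_zero_iff_of_nonneg fun k hk => sub_nonneg.2 (hle k (mem_range.1 hk))]
    at htel
  exact fun k hk => sub_eq_zero.1 (htel k (mem_range.2 hk))

theorem List.exists_closed_walk {α : Type*} {P : α × α → Prop} {vs : List α} (hne : vs ≠ [])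
    (h : ∀ a ∈ vs.zip (vs.rotate 1), P a) :
    ∃ n > 0, ∃ v : ℕ → α, v n = v 0 ∧ ∀ k < n, P (v k, v (k + 1)) := by
  have hn : 0 < vs.length := List.length_pos_iff.2 hne
  refine ⟨vs.length, hn, fun k => vs[k % vs.length]'(Nat.mod_lt _ hn), by simp, fun k hk => ?_⟩
  have hk' : k < (vs.zip (vs.rotate 1)).length := by simpa using hk
  convert h _ (List.getElem_mem hk') using 1
  simp [List.getElem_zip, List.getElem_rotate, Nat.mod_eq_of_lt hk]

section GeneralizedFlow

variable {V : Type*} [DecidableEq V] {E : Finset (V × V)} {γ : V × V → ℝ}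

variable (E γ) in
def netInflow : (V × V → ℝ) →ₗ[ℝ] V → ℝ where
  toFun f i := (∑ a ∈ E with a.2 = i, γ a * f a) - ∑ a ∈ E with a.1 = i, f a
  map_add' f g := by
    ext i
    simp only [Pi.add_apply, mul_add, sum_add_distrib]
    ring
  map_smul' c f := by
    ext i
    simp only [Pi.smul_apply, smul_eq_mul, RingHom.id_apply, mul_sum, mul_sub]
    congr 1
    exact sum_congr rfl fun _ _ => by ring

theorem excess_eq_netInflow_sub [Fintype V] (b : V → ℝ) (f : V × V → ℝ) (i : V) :
    excess E γ b f i = netInflow E γ f i - b i := rfl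

theorem netInflow_single {a : V × V} (ha : a ∈ E) (c : ℝ) (i : V) :
    netInflow E γ (Pi.single a c) i =
      (if a.2 = i then γ a * c else 0) - if a.1 = i then c else 0 := by
  simp only [netInflow, LinearMap.coe_mk, AddHom.coe_mk, sum_filter]
  rw [sum_eq_single_of_mem a ha fun x _ hx => by simp [hx],
    sum_eq_single_of_mem a ha fun x _ hx => by simp [hx]]
  simp

variable (E γ) in
structure IsConformalCirculation (d h : V × V → ℝ) : Prop where
  netInflow_eq_zero : ∀ i, netInflow E γ h i = 0
  mul_nonneg : ∀ a, 0 ≤ h a * d a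
  eq_zero_of_eq_zero : ∀ a, d a = 0 → h a = 0
  exists_ne_zero : ∃ a ∈ E, h a ≠ 0

theorem IsConformalCirculation.exists_closer [Fintype V] {ft fs h : V × V → ℝ} (b : V → ℝ)
    (hc : IsConformalCirculation E γ (ft - fs) h) (hft0 : ∀ a, 0 ≤ ft a) (hfs0 : ∀ a, 0 ≤ fs a) :
    ∃ g : V × V → ℝ, (∀ a, 0 ≤ g a) ∧ (∀ i, excess E γ b g i = excess E γ b fs i) ∧
      ∑ a ∈ E, |ft a - g a| < ∑ a ∈ E, |ft a - fs a| := by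
  obtain ⟨ε, hε, hle⟩ := exists_pos_mul_abs_le h (ft - fs) hc.eq_zero_of_eq_zero
  have hsign a : 0 ≤ ε * h a * (ft a - fs a) := by
    rw [mul_assoc]; exact _root_.mul_nonneg hε.le (hc.mul_nonneg a)
  have hbound a : |ε * h a| ≤ |ft a - fs a| := by
    rw [abs_mul, abs_of_pos hε]; exact hle a
  have hdist a : |ft a - (fs a + ε * h a)| = |ft a - fs a| - ε * |h a| := by
    rw [abs_sub_add_of_mul_nonneg (hsign a) (hbound a), abs_mul, abs_of_pos hε]
  refine ⟨fs + ε • h, fun a => ?_, fun i => ?_, ?_⟩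
  · exact (le_min (hfs0 a) (hft0 a)).trans (min_le_add_of_mul_nonneg (hsign a) (hbound a))
  · simp [excess_eq_netInflow_sub, hc.netInflow_eq_zero]
  · obtain ⟨e, he, hne⟩ := hc.exists_ne_zero
    refine sum_lt_sum (fun a _ => ?_) ⟨e, he, ?_⟩ <;>
      simp only [Pi.add_apply, Pi.smul_apply, smul_eq_mul, hdist]
    · exact sub_le_self _ (by positivity)
    · exact sub_lt_self _ (by positivity)

end GeneralizedFlow

section Conservative

variable {V : Type*} {E : Finset (V × V)} {γ : V × V → ℝ}

variable (E γ) in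
/-- A conservative labeling of `f`, up to the normalization `μ t = 1`. -/
structure IsConservative (f : V × V → ℝ) (μ : V → ℝ) : Prop where
  pos : ∀ i, 0 < μ i
  gain_mul_le : ∀ a ∈ E, γ a * μ a.1 ≤ μ a.2
  gain_mul_eq : ∀ a ∈ E, 0 < f a → γ a * μ a.1 = μ a.2

theorem IsConservative.of_apply_eq_one {f : V × V → ℝ} {μ : V → ℝ} {t : V} (ht : μ t = 1)
    (hpos : ∀ i, i ≠ t → 0 < μ i) (hle : ∀ a ∈ E, γ a * μ a.1 ≤ μ a.2)
    (heq : ∀ a ∈ E, 0 < f a → γ a * μ a.1 = μ a.2) : IsConservative E γ f μ where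
  pos i := by
    rcases eq_or_ne i t with rfl | hi
    exacts [ht ▸ one_pos, hpos i hi]
  gain_mul_le := hle
  gain_mul_eq := heq

/-- The arcs of the support `H` of the difference `h`: forward arcs of `E` carrying more flow
under `f*` (`fs`), and reversals of arcs of `E` carrying more flow under `f̃` (`ft`). -/
def IsDiffArc (E : Finset (V × V)) (ft fs : V × V → ℝ) (p : V × V) : Prop :=
  (p ∈ E ∧ ft p < fs p) ∨ (p.swap ∈ E ∧ fs p.swap < ft p.swap)

variable {ft fs : V × V → ℝ} {μ μs : V → ℝ} {p : V × V}

theorem IsDiffArc.div_le_div (hp : IsDiffArc E ft fs p) (hft0 : ∀ a, 0 ≤ ft a)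
    (hfs0 : ∀ a, 0 ≤ fs a) (hμ : IsConservative E γ ft μ) (hμs : IsConservative E γ fs μs) :
    μ p.1 / μs p.1 ≤ μ p.2 / μs p.2 := by
  rw [div_le_div_iff₀ (hμs.pos _) (hμs.pos _)]
  rcases hp with ⟨hE, hlt⟩ | ⟨hE, hlt⟩
  · calc μ p.1 * μs p.2 = γ p * μ p.1 * μs p.1 := by
          rw [← hμs.gain_mul_eq p hE ((hft0 p).trans_lt hlt)]; ring
      _ ≤ μ p.2 * μs p.1 := by gcongr; exacts [(hμs.pos _).le, hμ.gain_mul_le p hE]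
  · have heq := hμ.gain_mul_eq p.swap hE ((hfs0 _).trans_lt hlt)
    have hle := hμs.gain_mul_le p.swap hE
    rw [Prod.fst_swap, Prod.snd_swap] at heq hle
    calc μ p.1 * μs p.2 = μ p.2 * (γ p.swap * μs p.2) := by rw [← heq]; ring
      _ ≤ μ p.2 * μs p.1 := by gcongr; exact (hμ.pos _).le

theorem IsConservative.gain_mul_eq_of_div_eq (hμ : IsConservative E γ ft μ)
    (hμs : IsConservative E γ fs μs) {a : V × V} (ha : a ∈ E) (hpos : 0 < ft a)
    (hdiv : μ a.2 / μs a.2 = μ a.1 / μs a.1) : γ a * μs a.1 = μs a.2 := by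
  rw [div_eq_div_iff (hμs.pos _).ne' (hμs.pos _).ne', ← hμ.gain_mul_eq a ha hpos] at hdiv
  exact mul_left_cancel₀ (hμ.pos a.1).ne' (by linarith)

end Conservative

section DiffArcFlow

variable {V : Type*} [DecidableEq V] {E : Finset (V × V)} {γ : V × V → ℝ}
  {ft fs : V × V → ℝ} {μ μs : V → ℝ} {p : V × V}

/-- Shifts `fs` towards `ft` on the arc underlying `p`. The amounts are chosen so that, when that
arc is tight for `μs`, the net inflow is `μs p.1` at `p.1` and `-μs p.2` at `p.2`. -/
noncomputable def diffArcFlow (E : Finset (V × V)) (ft fs : V × V → ℝ) (μs : V → ℝ)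
    (p : V × V) : V × V → ℝ :=
  if p ∈ E ∧ ft p < fs p then Pi.single p (-μs p.1) else Pi.single p.swap (μs p.2)

theorem IsDiffArc.diffArcFlow_mul_nonneg (hp : IsDiffArc E ft fs p) (hμs : ∀ i, 0 ≤ μs i)
    (a : V × V) : 0 ≤ diffArcFlow E ft fs μs p a * (ft a - fs a) := by
  unfold diffArcFlow
  split_ifs with hfwd
  · rcases eq_or_ne a p with rfl | hne
    · simpa using mul_nonneg_of_nonpos_of_nonpos (neg_nonpos.2 (hμs a.1)) (by linarith [hfwd.2])
    · simp [hne]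
  · rcases eq_or_ne a p.swap with rfl | hne
    · simpa using mul_nonneg (hμs _) (by linarith [(hp.resolve_left hfwd).2])
    · simp [hne]

theorem IsDiffArc.diffArcFlow_eq_zero (hp : IsDiffArc E ft fs p) {a : V × V}
    (ha : ft a = fs a) : diffArcFlow E ft fs μs p a = 0 := by
  unfold diffArcFlow
  split_ifs with hfwd
  · exact Pi.single_eq_of_ne (by rintro rfl; exact hfwd.2.ne ha) _
  · exact Pi.single_eq_of_ne (by rintro rfl; exact (hp.resolve_left hfwd).2.ne' ha) _

theorem IsDiffArc.exists_diffArcFlow_mul_pos (hp : IsDiffArc E ft fs p) (hμs : ∀ i, 0 < μs i) :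
    ∃ a ∈ E, 0 < diffArcFlow E ft fs μs p a * (ft a - fs a) := by
  by_cases hfwd : p ∈ E ∧ ft p < fs p
  · refine ⟨p, hfwd.1, ?_⟩
    simpa [diffArcFlow, hfwd] using mul_neg_of_pos_of_neg (hμs p.1) (sub_neg.2 hfwd.2)
  · obtain ⟨hE, hlt⟩ := hp.resolve_left hfwd
    refine ⟨p.swap, hE, ?_⟩
    simpa [diffArcFlow, hfwd] using mul_pos (hμs p.2) (sub_pos.2 hlt)

theorem IsDiffArc.netInflow_diffArcFlow (hp : IsDiffArc E ft fs p) (hft0 : ∀ a, 0 ≤ ft a)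
    (hfs0 : ∀ a, 0 ≤ fs a) (hμ : IsConservative E γ ft μ) (hμs : IsConservative E γ fs μs)
    (hdiv : μ p.1 / μs p.1 = μ p.2 / μs p.2) (i : V) :
    netInflow E γ (diffArcFlow E ft fs μs p) i =
      (if p.1 = i then μs p.1 else 0) - if p.2 = i then μs p.2 else 0 := by
  by_cases hfwd : p ∈ E ∧ ft p < fs p
  · rw [diffArcFlow, if_pos hfwd, netInflow_single hfwd.1,
      ← hμs.gain_mul_eq p hfwd.1 ((hft0 p).trans_lt hfwd.2)]
    split_ifs <;> ring
  · obtain ⟨hE, hlt⟩ := hp.resolve_left hfwd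
    have htight := hμ.gain_mul_eq_of_div_eq hμs hE ((hfs0 _).trans_lt hlt) hdiv
    rw [Prod.fst_swap, Prod.snd_swap] at htight
    rw [diffArcFlow, if_neg hfwd, netInflow_single hE, Prod.fst_swap, Prod.snd_swap, htight]

theorem isConformalCirculation_sum_diffArcFlow (hft0 : ∀ a, 0 ≤ ft a) (hfs0 : ∀ a, 0 ≤ fs a)
    (hμ : IsConservative E γ ft μ) (hμs : IsConservative E γ fs μs) {n : ℕ} (hn : 0 < n)
    {v : ℕ → V} (hv : v n = v 0) (hstep : ∀ k < n, IsDiffArc E ft fs (v k, v (k + 1))) :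
    IsConformalCirculation E γ (ft - fs)
      (∑ k ∈ range n, diffArcFlow E ft fs μs (v k, v (k + 1))) := by
  have hdiv : ∀ k < n, μ (v (k + 1)) / μs (v (k + 1)) = μ (v k) / μs (v k) :=
    apply_succ_eq_of_le_succ (u := fun k => μ (v k) / μs (v k))
      (fun k hk => (hstep k hk).div_le_div hft0 hfs0 hμ hμs) (by simp only [hv])
  have hnonneg : ∀ a, ∀ k ∈ range n,
      0 ≤ diffArcFlow E ft fs μs (v k, v (k + 1)) a * (ft a - fs a) := fun a k hk =>
    (hstep k (mem_range.1 hk)).diffArcFlow_mul_nonneg (fun i => (hμs.pos i).le) a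
  refine ⟨fun i => ?_, fun a => ?_, fun a ha => ?_, ?_⟩
  · rw [map_sum, Finset.sum_apply, sum_congr rfl fun k hk =>
      (hstep k (mem_range.1 hk)).netInflow_diffArcFlow hft0 hfs0 hμ hμs
        (hdiv k (mem_range.1 hk)).symm i,
      sum_range_sub' (fun k => if v k = i then μs (v k) else 0), hv, sub_self]
  · rw [Finset.sum_apply, Pi.sub_apply, sum_mul]
    exact sum_nonneg (hnonneg a)
  · rw [Finset.sum_apply]
    exact sum_eq_zero fun k hk => (hstep k (mem_range.1 hk)).diffArcFlow_eq_zero (sub_eq_zero.1 ha)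
  · obtain ⟨a, ha, hpos⟩ := (hstep 0 hn).exists_diffArcFlow_mul_pos hμs.pos
    refine ⟨a, ha, fun h0 => hpos.not_ge ?_⟩
    calc _ ≤ ∑ k ∈ range n, diffArcFlow E ft fs μs (v k, v (k + 1)) a * (ft a - fs a) :=
          single_le_sum (hnonneg a) (mem_range.2 hn)
      _ = 0 := by rw [← sum_mul, ← Finset.sum_apply, h0, zero_mul]

end DiffArcFlow

theorem difference_support_acyclic_general {V : Type*} [Fintype V] [DecidableEq V]
    (E : Finset (V × V)) (γ : V × V → ℝ) (b : V → ℝ) (t : V)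
    (ft fs : V × V → ℝ) (μ μs : V → ℝ)
    (hft0 : ∀ a, 0 ≤ ft a) (hfs0 : ∀ a, 0 ≤ fs a)
    (hfsfeas : ∀ i, i ≠ t → 0 ≤ excess E γ b fs i)
    -- μ is conservative for f̃
    (hμt : μ t = 1) (hμpos : ∀ i, i ≠ t → 0 < μ i)
    (hμdual : ∀ a ∈ E, γ a * μ a.1 ≤ μ a.2)
    (hμslack : ∀ a ∈ E, 0 < ft a → γ a * μ a.1 = μ a.2)
    -- μ* is conservative for f*
    (hμst : μs t = 1) (hμspos : ∀ i, i ≠ t → 0 < μs i)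
    (hμsdual : ∀ a ∈ E, γ a * μs a.1 ≤ μs a.2)
    (hμsslack : ∀ a ∈ E, 0 < fs a → γ a * μs a.1 = μs a.2)
    -- f* minimizes ‖f̃ − ·‖₁ among optimal solutions
    (hmin : ∀ g : V × V → ℝ, (∀ a, 0 ≤ g a) →
        (∀ i, i ≠ t → 0 ≤ excess E γ b g i) →
        excess E γ b fs t ≤ excess E γ b g t →
        (∑ a ∈ E, |ft a - fs a|) ≤ ∑ a ∈ E, |ft a - g a|) :
    ¬ ∃ vs : List V, vs ≠ [] ∧
        ∀ a ∈ vs.zip (vs.rotate 1),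
          (a ∈ E ∧ ft a < fs a) ∨
          ((a.2, a.1) ∈ E ∧ fs (a.2, a.1) < ft (a.2, a.1)) := by
  rintro ⟨vs, hne, hcycle⟩
  obtain ⟨n, hn, v, hv, hstep⟩ := List.exists_closed_walk (P := IsDiffArc E ft fs) hne hcycle
  have hμ := IsConservative.of_apply_eq_one (f := ft) hμt hμpos hμdual hμslack
  have hμs := IsConservative.of_apply_eq_one (f := fs) hμst hμspos hμsdual hμsslack
  obtain ⟨g, hg0, hgexcess, hcloser⟩ :=
    (isConformalCirculation_sum_diffArcFlow hft0 hfs0 hμ hμs hn hv hstep).exists_closer b hft0 hfs0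
  have hgfeas : ∀ i, i ≠ t → 0 ≤ excess E γ b g i := fun i hi => hgexcess i ▸ hfsfeas i hi
  exact (hmin g hg0 hgfeas (hgexcess t).ge).not_gt hcloser

/-- let f̃ admit a conservative labeling μ and f* be an optimal
solution, admitting a conservative labeling μ*, chosen among optimal solutions
to minimize ‖f̃ − f*‖₁. Then the support of the residual difference flow h
contains no directed cycle. -/
theorem difference_support_acyclic {V : Type*} [Fintype V] [DecidableEq V]
    (E : Finset (V × V)) (γ : V × V → ℝ) (b : V → ℝ) (t : V)
    (ft fs : V × V → ℝ) (μ μs : V → ℝ)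
    (hγ : ∀ a ∈ E, 0 < γ a)
    (hft0 : ∀ a, 0 ≤ ft a) (hfs0 : ∀ a, 0 ≤ fs a)
    (hftfeas : ∀ i, i ≠ t → 0 ≤ excess E γ b ft i)
    (hfsfeas : ∀ i, i ≠ t → 0 ≤ excess E γ b fs i)
    -- μ is conservative for f̃
    (hμt : μ t = 1) (hμpos : ∀ i, i ≠ t → 0 < μ i)
    (hμdual : ∀ a ∈ E, γ a * μ a.1 ≤ μ a.2)
    (hμslack : ∀ a ∈ E, 0 < ft a → γ a * μ a.1 = μ a.2)
    -- μ* is conservative for f*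
    (hμst : μs t = 1) (hμspos : ∀ i, i ≠ t → 0 < μs i)
    (hμsdual : ∀ a ∈ E, γ a * μs a.1 ≤ μs a.2)
    (hμsslack : ∀ a ∈ E, 0 < fs a → γ a * μs a.1 = μs a.2)
    -- f* is optimal
    (hopt : ∀ g : V × V → ℝ, (∀ a, 0 ≤ g a) →
        (∀ i, i ≠ t → 0 ≤ excess E γ b g i) →
        excess E γ b g t ≤ excess E γ b fs t)
    -- f* minimizes ‖f̃ − ·‖₁ among optimal solutions
    (hmin : ∀ g : V × V → ℝ, (∀ a, 0 ≤ g a) →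
        (∀ i, i ≠ t → 0 ≤ excess E γ b g i) →
        excess E γ b fs t ≤ excess E γ b g t →
        (∑ a ∈ E, |ft a - fs a|) ≤ ∑ a ∈ E, |ft a - g a|) :
    ¬ ∃ vs : List V, vs ≠ [] ∧
        ∀ a ∈ vs.zip (vs.rotate 1),
          (a ∈ E ∧ ft a < fs a) ∨
          ((a.2, a.1) ∈ E ∧ fs (a.2, a.1) < ft (a.2, a.1)) :=
  difference_support_acyclic_general E γ b t ft fs μ μs hft0 hfs0 hfsfeas hμt hμpos hμdual hμslack
    hμst hμspos hμsdual hμsslack hmin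
end

section
/- Let pq ∈ E with p ≠ t be an arc such that γ_{pq} μ*_p = μ*_q in every optimal solution μ* of the dual (D). Contract pq to obtain instance (V', E', t, b', γ') with V' = V ∖ {p}, gain γ'_{iq} = γ_{ip} γ_{pq} for former arcs ip, γ'_{qi} = γ_{pi}/γ_{pq} for former arcs pi, and b'_q = b_q + γ_{pq} b_p. If μ' is an optimal dual solution of the contracted instance, then the extension μ given by μ_i = μ'_i for i ≠ p and μ_p = μ'_q / γ_{pq} is an optimal dual solution of the original instance. -/
/-!
A solution that is tight on `pq` has the same objective value in both instances, because
`b_p / ν_p = γ_pq b_p / ν_q`. An optimal `ν₀` of the original dual is tight by hypothesis, and its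
restriction is feasible for the contracted dual since each contracted arc is an original arc or a
path through `p` with the product gain. Conversely the extension `μ` is tight, and it is feasible:
every original arc survives contraction with at most the contracted gain, except loops and a `qp`
arc closing a cycle with `pq`, and the existence of `ν₀` forces such cycles to have gain at most
`1`. Hence `obj ν ≤ obj ν₀ = obj' ν₀ ≤ obj' μ' = obj μ` for every feasible `ν`.
-/

/-- Dual feasibility for the original instance. -/
def dualFeas {V : Type*} (E : Finset (V × V)) (γ : V × V → ℝ) (t : V)
    (ν : V → ℝ) : Prop :=
  ν t = 1 ∧ (∀ i, i ≠ t → 0 < ν i) ∧ ∀ a ∈ E, γ a * ν a.1 ≤ ν a.2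

/-- Dual objective for the original instance. -/
noncomputable def dualObj {V : Type*} [Fintype V] (b : V → ℝ) (ν : V → ℝ) : ℝ :=
  ∑ i, b i / ν i

/-- Dual feasibility for the contracted instance (node `p` deleted). -/
def dualFeasC {V : Type*} (E' : Finset (V × V)) (γ' : V × V → ℝ) (t p : V)
    (ν : V → ℝ) : Prop :=
  ν t = 1 ∧ (∀ i, i ≠ t → i ≠ p → 0 < ν i) ∧ ∀ a ∈ E', γ' a * ν a.1 ≤ ν a.2

/-- Dual objective for the contracted instance. -/
noncomputable def dualObjC {V : Type*} [Fintype V] [DecidableEq V] (b' : V → ℝ)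
    (p : V) (ν : V → ℝ) : ℝ :=
  ∑ i ∈ Finset.univ.erase p, b' i / ν i

open Finset

universe u

section GainCycles

variable {V : Type u} {E : Finset (V × V)} {γ : V × V → ℝ} {t : V} {ν : V → ℝ}

theorem dualFeas.pos (hν : dualFeas E γ t ν) (i : V) : 0 < ν i := by
  rcases eq_or_ne i t with rfl | hit
  · rw [hν.1]
    exact one_pos
  · exact hν.2.1 i hit

theorem gain_le_one_of_loop (hν : dualFeas E γ t ν) {i : V} (hi : (i, i) ∈ E) :
    γ (i, i) ≤ 1 := by
  have h : γ (i, i) * ν i ≤ 1 * ν i := by simpa using hν.2.2 _ hi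
  exact le_of_mul_le_mul_right h (hν.pos i)

theorem gain_mul_gain_le_one_of_cycle (hν : dualFeas E γ t ν) {i j : V}
    (hγij : 0 ≤ γ (i, j)) (hij : (i, j) ∈ E) (hji : (j, i) ∈ E) :
    γ (j, i) * γ (i, j) ≤ 1 := by
  have h₁ : γ (i, j) * ν i ≤ ν j := hν.2.2 _ hij
  have h₂ : γ (j, i) * ν j ≤ ν i := hν.2.2 _ hji
  have h : γ (j, i) * γ (i, j) * ν j ≤ 1 * ν j :=
    calc γ (j, i) * γ (i, j) * ν j = γ (i, j) * (γ (j, i) * ν j) := by ring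
      _ ≤ γ (i, j) * ν i := mul_le_mul_of_nonneg_left h₂ hγij
      _ ≤ 1 * ν j := by rw [one_mul]; exact h₁
  exact le_of_mul_le_mul_right h (hν.pos j)

end GainCycles

section Contraction

variable {V : Type u} {E E' : Finset (V × V)} {γ γ' : V × V → ℝ} {t p q : V} {ν : V → ℝ}

theorem dualObj_eq_dualObjC_of_tight [Fintype V] [DecidableEq V] {b b' : V → ℝ}
    (hqp : q ≠ p) (hb' : ∀ i, i ≠ p → b' i = if i = q then b q + γ (p, q) * b p else b i)
    (hγpq : γ (p, q) ≠ 0) (htight : γ (p, q) * ν p = ν q) :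
    dualObj b ν = dualObjC b' p ν := by
  have hq : q ∈ univ.erase p := mem_erase.mpr ⟨hqp, mem_univ q⟩
  have hrest : ∑ i ∈ (univ.erase p).erase q, b' i / ν i =
      ∑ i ∈ (univ.erase p).erase q, b i / ν i := by
    refine sum_congr rfl fun i hi => ?_
    obtain ⟨hiq, hi⟩ := mem_erase.mp hi
    rw [hb' i (mem_erase.mp hi).1, if_neg hiq]
  have hbp : b p / ν p = γ (p, q) * b p / ν q := by
    rw [← htight, mul_div_mul_left _ _ hγpq]
  rw [dualObj, dualObjC, ← add_sum_erase _ _ (mem_univ p), ← add_sum_erase _ _ hq,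
    ← add_sum_erase _ _ hq, hrest, hb' q hqp, if_pos rfl, hbp, add_div]
  ring

theorem dualObjC_congr [Fintype V] [DecidableEq V] (b' : V → ℝ) {ν' : V → ℝ}
    (h : ∀ i, i ≠ p → ν i = ν' i) : dualObjC b' p ν = dualObjC b' p ν' :=
  sum_congr rfl fun i hi => by rw [h i (mem_erase.mp hi).1]

theorem dualFeasC.pos (hν : dualFeasC E' γ' t p ν) (htp : t ≠ p) {i : V} (hip : i ≠ p) :
    0 < ν i := by
  rcases eq_or_ne i t with rfl | hit
  · rw [hν.1]
    exact one_pos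
  · exact hν.2.1 i hit hip

theorem dualFeasC.congr {ν' : V → ℝ} (hν : dualFeasC E' γ' t p ν)
    (hE' : ∀ a ∈ E', a.1 ≠ p ∧ a.2 ≠ p) (htp : t ≠ p) (h : ∀ i, i ≠ p → ν i = ν' i) :
    dualFeasC E' γ' t p ν' := by
  refine ⟨h t htp ▸ hν.1, fun i hit hip => h i hip ▸ hν.2.1 i hit hip, fun a ha => ?_⟩
  rw [← h _ (hE' a ha).1, ← h _ (hE' a ha).2]
  exact hν.2.2 a ha

theorem dualFeasC_of_dualFeas_of_tight (hν : dualFeas E γ t ν)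
    (hγpq : 0 < γ (p, q)) (htight : γ (p, q) * ν p = ν q)
    (hattain : ∀ i j : V, (i, j) ∈ E' →
        ((i, j) ∈ E ∧ γ' (i, j) = γ (i, j)) ∨
        (j = q ∧ (i, p) ∈ E ∧ γ' (i, j) = γ (i, p) * γ (p, q)) ∨
        (i = q ∧ (p, j) ∈ E ∧ γ' (i, j) = γ (p, j) / γ (p, q))) :
    dualFeasC E' γ' t p ν := by
  refine ⟨hν.1, fun i _ _ => hν.pos i, ?_⟩
  rintro ⟨i, j⟩ ha
  change γ' (i, j) * ν i ≤ ν j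
  rcases hattain i j ha with ⟨hij, hγ'⟩ | ⟨rfl, hip, hγ'⟩ | ⟨rfl, hpj, hγ'⟩
  · rw [hγ']
    exact hν.2.2 _ hij
  · have h : γ (i, p) * ν i ≤ ν p := hν.2.2 _ hip
    calc γ' (i, j) * ν i = γ (p, j) * (γ (i, p) * ν i) := by rw [hγ']; ring
      _ ≤ γ (p, j) * ν p := mul_le_mul_of_nonneg_left h hγpq.le
      _ = ν j := htight
  · have h : γ (p, j) * ν p ≤ ν j := hν.2.2 _ hpj
    calc γ' (i, j) * ν i = γ (p, j) * ν p := by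
          rw [hγ', ← htight]; field_simp
      _ ≤ ν j := h

theorem dualFeas_of_dualFeasC_of_tight (hqp : q ≠ p) (htp : t ≠ p) (hγpq : 0 < γ (p, q))
    (hE' : ∀ i j : V, ((i, j) ∈ E' ↔ (i ≠ p ∧ j ≠ p ∧ ¬(i = q ∧ j = q) ∧
        ((i, j) ∈ E ∨ (j = q ∧ (i, p) ∈ E) ∨ (i = q ∧ (p, j) ∈ E)))))
    (hub1 : ∀ i j : V, (i, j) ∈ E' → (i, j) ∈ E → γ (i, j) ≤ γ' (i, j))
    (hub2 : ∀ i j : V, (i, j) ∈ E' → j = q → (i, p) ∈ E →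
        γ (i, p) * γ (p, q) ≤ γ' (i, j))
    (hub3 : ∀ i j : V, (i, j) ∈ E' → i = q → (p, j) ∈ E →
        γ (p, j) / γ (p, q) ≤ γ' (i, j))
    (hloop : ∀ i, (i, i) ∈ E → γ (i, i) ≤ 1) (hcycle : (q, p) ∈ E → γ (q, p) * γ (p, q) ≤ 1)
    (hν : dualFeasC E' γ' t p ν) (htight : γ (p, q) * ν p = ν q) :
    dualFeas E γ t ν := by
  have hpos : ∀ i, i ≠ p → 0 < ν i := fun i hip => hν.pos htp hip
  have hνp : 0 < ν p := pos_of_mul_pos_right (htight ▸ hpos q hqp) hγpq.le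
  have harc : ∀ i j, (i, j) ∈ E' → γ' (i, j) * ν i ≤ ν j := fun i j h => hν.2.2 _ h
  refine ⟨hν.1, fun i _ => ?_, ?_⟩
  · rcases eq_or_ne p i with rfl | hip
    exacts [hνp, hpos i hip.symm]
  rintro ⟨i, j⟩ hij
  change γ (i, j) * ν i ≤ ν j
  rcases eq_or_ne p i with rfl | hip
  · rcases eq_or_ne p j with rfl | hjp
    · exact mul_le_of_le_one_left hνp.le (hloop _ hij)
    rcases eq_or_ne q j with rfl | hjq
    · exact htight.le
    have hqj : (q, j) ∈ E' :=
      (hE' q j).2 ⟨hqp, hjp.symm, fun h => hjq h.2.symm, .inr (.inr ⟨rfl, hij⟩)⟩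
    calc γ (p, j) * ν p = γ (p, j) / γ (p, q) * ν q := by rw [← htight]; field_simp
      _ ≤ γ' (q, j) * ν q := by gcongr; exacts [(hpos q hqp).le, hub3 q j hqj rfl hij]
      _ ≤ ν j := harc q j hqj
  rcases eq_or_ne p j with rfl | hjp
  · have h : γ (i, p) * γ (p, q) * ν i ≤ γ (p, q) * ν p := by
      rcases eq_or_ne q i with rfl | hiq
      · calc γ (q, p) * γ (p, q) * ν q ≤ 1 * ν q :=
            mul_le_mul_of_nonneg_right (hcycle hij) (hpos q hqp).le
          _ = γ (p, q) * ν p := by rw [one_mul, htight]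
      have hiq' : (i, q) ∈ E' :=
        (hE' i q).2 ⟨hip.symm, hqp, fun h => hiq h.1.symm, .inr (.inl ⟨rfl, hij⟩)⟩
      calc γ (i, p) * γ (p, q) * ν i ≤ γ' (i, q) * ν i := by
            gcongr; exacts [(hpos i hip.symm).le, hub2 i q hiq' rfl hij]
        _ ≤ ν q := harc i q hiq'
        _ = γ (p, q) * ν p := htight.symm
    exact le_of_mul_le_mul_left (by linarith) hγpq
  rcases eq_or_ne i j with rfl | hij_ne
  · exact mul_le_of_le_one_left (hpos i hip.symm).le (hloop _ hij)
  have hij' : (i, j) ∈ E' :=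
    (hE' i j).2 ⟨hip.symm, hjp.symm, fun h => hij_ne (h.1.trans h.2.symm), .inl hij⟩
  calc γ (i, j) * ν i ≤ γ' (i, j) * ν i := by
        gcongr; exacts [(hpos i hip.symm).le, hub1 i j hij' hij]
    _ ≤ ν j := harc i j hij'

end Contraction

/-- contracting an arc pq (p ≠ t) that is tight in every optimal
dual solution, and extending an optimal dual solution μ' of the contracted
instance by μ_p = μ'_q / γ_{pq}, yields an optimal dual solution of the
original instance. -/
theorem contracted_dual_extends {V : Type*} [Fintype V] [DecidableEq V]
    (E E' : Finset (V × V)) (γ γ' : V × V → ℝ) (b b' : V → ℝ) (t p q : V)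
    (hγ : ∀ a ∈ E, 0 < γ a)
    (hpq : (p, q) ∈ E) (hpt : p ≠ t) (hqp : q ≠ p)
    -- description of the contracted instance:
    (hE' : ∀ i j : V, ((i, j) ∈ E' ↔ (i ≠ p ∧ j ≠ p ∧ ¬(i = q ∧ j = q) ∧
        ((i, j) ∈ E ∨ (j = q ∧ (i, p) ∈ E) ∨ (i = q ∧ (p, j) ∈ E)))))
    (hub1 : ∀ i j : V, (i, j) ∈ E' → (i, j) ∈ E → γ (i, j) ≤ γ' (i, j))
    (hub2 : ∀ i j : V, (i, j) ∈ E' → j = q → (i, p) ∈ E →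
        γ (i, p) * γ (p, q) ≤ γ' (i, j))
    (hub3 : ∀ i j : V, (i, j) ∈ E' → i = q → (p, j) ∈ E →
        γ (p, j) / γ (p, q) ≤ γ' (i, j))
    (hattain : ∀ i j : V, (i, j) ∈ E' →
        ((i, j) ∈ E ∧ γ' (i, j) = γ (i, j)) ∨
        (j = q ∧ (i, p) ∈ E ∧ γ' (i, j) = γ (i, p) * γ (p, q)) ∨
        (i = q ∧ (p, j) ∈ E ∧ γ' (i, j) = γ (p, j) / γ (p, q)))
    (hb' : ∀ i, i ≠ p → b' i = if i = q then b q + γ (p, q) * b p else b i)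
    -- pq is tight in every optimal dual solution of the original instance
    (htight : ∀ ν : V → ℝ, dualFeas E γ t ν →
        (∀ ν', dualFeas E γ t ν' → dualObj b ν' ≤ dualObj b ν) →
        γ (p, q) * ν p = ν q)
    -- the original dual has an optimal solution
    (hexists : ∃ ν : V → ℝ, dualFeas E γ t ν ∧
        ∀ ν', dualFeas E γ t ν' → dualObj b ν' ≤ dualObj b ν)
    -- μ' is an optimal dual solution of the contracted instance
    (μ' : V → ℝ)
    (hμ'feas : dualFeasC E' γ' t p μ')
    (hμ'opt : ∀ ν', dualFeasC E' γ' t p ν' → dualObjC b' p ν' ≤ dualObjC b' p μ')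
    -- the extension μ
    (μ : V → ℝ)
    (hμdef : ∀ i, μ i = if i = p then μ' q / γ (p, q) else μ' i) :
    dualFeas E γ t μ ∧ ∀ ν, dualFeas E γ t ν → dualObj b ν ≤ dualObj b μ := by
  obtain ⟨ν₀, hν₀, hν₀opt⟩ := hexists
  have hγpq : 0 < γ (p, q) := hγ _ hpq
  have htp : t ≠ p := hpt.symm
  have hν₀tight : γ (p, q) * ν₀ p = ν₀ q := htight ν₀ hν₀ hν₀opt
  have hμμ' : ∀ i, i ≠ p → μ' i = μ i := fun i hip => by rw [hμdef, if_neg hip]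
  have hμtight : γ (p, q) * μ p = μ q := by
    rw [hμdef, if_pos rfl, ← hμμ' q hqp]
    field_simp
  have hE'p : ∀ a ∈ E', a.1 ≠ p ∧ a.2 ≠ p := fun a ha =>
    let ⟨h₁, h₂, _⟩ := (hE' a.1 a.2).1 ha
    ⟨h₁, h₂⟩
  have hμ : dualFeas E γ t μ :=
    dualFeas_of_dualFeasC_of_tight hqp htp hγpq hE' hub1 hub2 hub3
      (fun _ => gain_le_one_of_loop hν₀) (gain_mul_gain_le_one_of_cycle hν₀ hγpq.le hpq)
      (hμ'feas.congr hE'p htp hμμ') hμtight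
  refine ⟨hμ, fun ν hν => ?_⟩
  calc dualObj b ν ≤ dualObj b ν₀ := hν₀opt ν hν
    _ = dualObjC b' p ν₀ := dualObj_eq_dualObjC_of_tight hqp hb' hγpq.ne' hν₀tight
    _ ≤ dualObjC b' p μ' :=
      hμ'opt ν₀ (dualFeasC_of_dualFeas_of_tight hν₀ hγpq hν₀tight hattain)
    _ = dualObjC b' p μ := dualObjC_congr b' hμμ'
    _ = dualObj b μ := (dualObj_eq_dualObjC_of_tight hqp hb' hγpq.ne' hμtight).symm
end

section
/- In the Elementary Step subroutine applied to a Δ-feasible pair (f, μ) and a set T ⊆ V − t satisfying: e^μ_i < (4d_i + 8)Δ for i ∈ (V∖T) − t, e^μ_i ≥ (d_i + 1)Δ for i ∈ T, γ^μ_{ij} < 1 for all ij ∈ E[T, V∖T], and f^μ_{ij} ≤ Δ for all ij ∈ E[V∖T, T], the step multiplier α (the minimum of the values δ_i over i ∈ (V∖T) − t and of 1/γ^μ_{ij} over arcs ij leaving T) satisfies α > 1. -/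
/-- Number of arcs incident to `i`. -/
def deg {V : Type*} [DecidableEq V] (E : Finset (V × V)) (i : V) : ℕ :=
  (E.filter (fun a => a.1 = i ∨ a.2 = i)).card

/-- `r₁(i)`: flow incoming on non-tight arcs within `V ∖ T`. -/
noncomputable def r1 {V : Type*} [DecidableEq V] (E : Finset (V × V))
    (γ : V × V → ℝ) (μ : V → ℝ) (f : V × V → ℝ) (T : Finset V) (i : V) : ℝ :=
  ∑ a ∈ E.filter (fun a => a.2 = i ∧ a.1 ∉ T ∧ γ a * μ a.1 < μ a.2), γ a * f a

/-- `r₂(i)`: flow incoming on the remaining arcs. -/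
noncomputable def r2 {V : Type*} [DecidableEq V] (E : Finset (V × V))
    (γ : V × V → ℝ) (μ : V → ℝ) (f : V × V → ℝ) (T : Finset V) (i : V) : ℝ :=
  ∑ a ∈ E.filter (fun a => a.2 = i ∧ ¬(a.1 ∉ T ∧ γ a * μ a.1 < μ a.2)), γ a * f a

/-- `r₃(i)`: flow outgoing on non-tight arcs within `V ∖ T` or on arcs entering `T`. -/
noncomputable def r3 {V : Type*} [DecidableEq V] (E : Finset (V × V))
    (γ : V × V → ℝ) (μ : V → ℝ) (f : V × V → ℝ) (T : Finset V) (i : V) : ℝ :=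
  ∑ a ∈ E.filter (fun a => a.1 = i ∧ ((a.2 ∉ T ∧ γ a * μ a.1 < μ a.2) ∨ a.2 ∈ T)), f a

/-- `r₄(i)`: flow outgoing on the remaining arcs. -/
noncomputable def r4 {V : Type*} [DecidableEq V] (E : Finset (V × V))
    (γ : V × V → ℝ) (μ : V → ℝ) (f : V × V → ℝ) (T : Finset V) (i : V) : ℝ :=
  ∑ a ∈ E.filter (fun a => a.1 = i ∧ ¬((a.2 ∉ T ∧ γ a * μ a.1 < μ a.2) ∨ a.2 ∈ T)), f a

/-- The threshold `δ_i` of the Elementary Step. -/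
noncomputable def delta {V : Type*} [DecidableEq V] (E : Finset (V × V))
    (γ : V × V → ℝ) (μ : V → ℝ) (f : V × V → ℝ) (T : Finset V) (b : V → ℝ)
    (Δ : ℝ) (i : V) : ℝ :=
  ((4 * (deg E i : ℝ) + 8) * Δ * μ i + r3 E γ μ f T i - r1 E γ μ f T i)
    / (r2 E γ μ f T i - r4 E γ μ f T i - b i)


/-! The excess of a node `i` balances its four partial flows, `e_i = r₁ + r₂ - r₃ - r₄ - b_i`.
Since `r₁` is part of the reserve `R_i ≤ e_i` and `r₃ ≥ 0`, the denominator of `δ_i` equals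
`e_i - r₁ + r₃ ≥ 0`, while its numerator is `(4d_i + 8)Δμ_i - r₁ + r₃ > e_i - r₁ + r₃`; hence
`δ_i > 1` whenever it is finite. On an arc leaving `T`, `1/γ^μ > 1` is just its non-tightness. -/

section PartialFlows

variable {V : Type*} [DecidableEq V] (E : Finset (V × V)) (γ : V × V → ℝ) (μ : V → ℝ)
  (f : V × V → ℝ) (T : Finset V) (i : V)

theorem sum_incoming_eq_r1_add_r2 :
    ∑ a ∈ E.filter (fun a => a.2 = i), γ a * f a = r1 E γ μ f T i + r2 E γ μ f T i := by
  rw [r1, r2, ← Finset.sum_filter_add_sum_filter_not _ (fun a => a.1 ∉ T ∧ γ a * μ a.1 < μ a.2),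
    Finset.filter_filter, Finset.filter_filter]

theorem sum_outgoing_eq_r3_add_r4 :
    ∑ a ∈ E.filter (fun a => a.1 = i), f a = r3 E γ μ f T i + r4 E γ μ f T i := by
  rw [r3, r4,
    ← Finset.sum_filter_add_sum_filter_not _ (fun a => (a.2 ∉ T ∧ γ a * μ a.1 < μ a.2) ∨ a.2 ∈ T),
    Finset.filter_filter, Finset.filter_filter]

theorem excess_eq_r1_add_r2_sub_r3_sub_r4 [Fintype V] (b : V → ℝ) :
    excess E γ b f i
      = r1 E γ μ f T i + r2 E γ μ f T i - (r3 E γ μ f T i + r4 E γ μ f T i) - b i := by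
  rw [excess, sum_incoming_eq_r1_add_r2 E γ μ f T, sum_outgoing_eq_r3_add_r4 E γ μ f T]

theorem r1_le_reserve [Fintype V] (hγ : ∀ a ∈ E, 0 ≤ γ a) (hf : ∀ a ∈ E, 0 ≤ f a) :
    r1 E γ μ f T i ≤ reserve E γ μ f i := by
  refine Finset.sum_le_sum_of_subset_of_nonneg (fun a ha => ?_) (fun a ha _ => ?_)
  · simp only [Finset.mem_filter] at ha ⊢
    exact ⟨ha.1, ha.2.1, ha.2.2.2⟩
  · have ha := (Finset.mem_filter.mp ha).1
    exact mul_nonneg (hγ a ha) (hf a ha)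

theorem r3_nonneg (hf : ∀ a ∈ E, 0 ≤ f a) : 0 ≤ r3 E γ μ f T i :=
  Finset.sum_nonneg fun a ha => hf a (Finset.mem_filter.mp ha).1

end PartialFlows

theorem one_lt_delta {V : Type*} [Fintype V] [DecidableEq V] (E : Finset (V × V))
    (γ : V × V → ℝ) (b : V → ℝ) (f : V × V → ℝ) (μ : V → ℝ) (Δ : ℝ) (T : Finset V) (i : V)
    (hγ : ∀ a ∈ E, 0 ≤ γ a) (hf : ∀ a ∈ E, 0 ≤ f a)
    (hres : reserve E γ μ f i ≤ excess E γ b f i)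
    (hexcess : excess E γ b f i < (4 * (deg E i : ℝ) + 8) * Δ * μ i)
    (hD : r2 E γ μ f T i - r4 E γ μ f T i - b i ≠ 0) :
    1 < delta E γ μ f T b Δ i := by
  have hD_eq : r2 E γ μ f T i - r4 E γ μ f T i - b i
      = excess E γ b f i - r1 E γ μ f T i + r3 E γ μ f T i := by
    rw [excess_eq_r1_add_r2_sub_r3_sub_r4 E γ μ f T]
    ring
  have hr1 := r1_le_reserve E γ μ f T i hγ hf
  have hr3 := r3_nonneg E γ μ f T i hf
  have hD_pos : 0 < r2 E γ μ f T i - r4 E γ μ f T i - b i :=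
    (by linarith : (0 : ℝ) ≤ _).lt_of_ne hD.symm
  rw [delta, one_lt_div hD_pos]
  linarith

theorem elementary_step_alpha_gt_one_general {V : Type*} [Fintype V] [DecidableEq V]
    (E : Finset (V × V)) (γ : V × V → ℝ) (b : V → ℝ) (t : V)
    (f : V × V → ℝ) (μ : V → ℝ) (Δ : ℝ) (T : Finset V)
    (hγ : ∀ a ∈ E, 0 < γ a)
    (hf0 : ∀ a, 0 ≤ f a)
    -- Δ-feasibility of (f, μ):
    (hμpos : ∀ i, i ≠ t → 0 < μ i)
    (hres : ∀ i, i ≠ t → reserve E γ μ f i ≤ excess E γ b f i)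
    -- the hypotheses on T:
    (htT : t ∉ T)
    (hout : ∀ i, i ≠ t → i ∉ T →
        excess E γ b f i / μ i < (4 * (deg E i : ℝ) + 8) * Δ)
    (hcrossnt : ∀ a ∈ E, a.1 ∈ T → a.2 ∉ T → γ a * μ a.1 < μ a.2) :
    (∀ i, i ≠ t → i ∉ T → r2 E γ μ f T i - r4 E γ μ f T i - b i ≠ 0 →
        1 < delta E γ μ f T b Δ i) ∧
    (∀ a ∈ E, a.1 ∈ T → a.2 ∉ T → 1 < μ a.2 / (γ a * μ a.1)) := by
  refine ⟨fun i hit hiT hD => ?_, fun a ha haT haT' => ?_⟩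
  · have hexcess := (div_lt_iff₀ (hμpos i hit)).mp (hout i hit hiT)
    exact one_lt_delta E γ b f μ Δ T i (fun a ha => (hγ a ha).le) (fun a _ => hf0 a)
      (hres i hit) hexcess hD
  · have hat : a.1 ≠ t := fun h => htT (h ▸ haT)
    exact (one_lt_div (mul_pos (hγ a ha) (hμpos a.1 hat))).mpr (hcrossnt a ha haT haT')

/-- under the hypotheses of the Elementary Step, the multiplier
α — the minimum of the finite values δ_i over i ∈ (V∖T) − t and of 1/γ^μ_{ij}
over arcs ij leaving T — satisfies α > 1, i.e. each of these quantities
exceeds 1. -/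
theorem elementary_step_alpha_gt_one {V : Type*} [Fintype V] [DecidableEq V]
    (E : Finset (V × V)) (γ : V × V → ℝ) (b : V → ℝ) (t : V)
    (f : V × V → ℝ) (μ : V → ℝ) (Δ : ℝ) (T : Finset V)
    (hΔ : 0 < Δ)
    (hγ : ∀ a ∈ E, 0 < γ a)
    (hf0 : ∀ a, 0 ≤ f a)
    -- Δ-feasibility of (f, μ):
    (hμt : μ t = 1) (hμpos : ∀ i, i ≠ t → 0 < μ i)
    (hdual : ∀ a ∈ E, γ a * μ a.1 ≤ μ a.2)
    (hfat : ∀ a ∈ E, Δ < f a / μ a.1 → μ a.2 ≤ γ a * μ a.1)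
    (hres : ∀ i, i ≠ t → reserve E γ μ f i ≤ excess E γ b f i)
    -- the hypotheses on T:
    (htT : t ∉ T)
    (hout : ∀ i, i ≠ t → i ∉ T →
        excess E γ b f i / μ i < (4 * (deg E i : ℝ) + 8) * Δ)
    (hin : ∀ i ∈ T, ((deg E i : ℝ) + 1) * Δ ≤ excess E γ b f i / μ i)
    (hcrossnt : ∀ a ∈ E, a.1 ∈ T → a.2 ∉ T → γ a * μ a.1 < μ a.2)
    (hcrossflow : ∀ a ∈ E, a.1 ∉ T → a.2 ∈ T → f a / μ a.1 ≤ Δ) :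
    (∀ i, i ≠ t → i ∉ T → r2 E γ μ f T i - r4 E γ μ f T i - b i ≠ 0 →
        1 < delta E γ μ f T b Δ i) ∧
    (∀ a ∈ E, a.1 ∈ T → a.2 ∉ T → 1 < μ a.2 / (γ a * μ a.1)) :=
  elementary_step_alpha_gt_one_general E γ b t f μ Δ T hγ hf0 hμpos hres htT hout hcrossnt
end

section
/- Let β_i = e_i/(Δ μ_i) before an Elementary Step with multiplier α ≥ 1 (which divides Δ by α, multiplies μ_i by α for i ∈ T, and divides the flow by α on non-tight arcs within V∖T and on arcs entering T), and let β'_i be the value afterwards. Then for every node i ≠ t: β'_i ≤ α² max{β_i, d_i}. -/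
/-!
At a node of `T` the denominator `Δμ_i` is unchanged, outgoing flows are untouched and incoming
flows only decrease, so `β_i` cannot grow. Off `T` the denominator shrinks by the factor `α`, while
each of the at most `d_i` outgoing arcs whose flow is divided by `α` carried at most `Δμ_i`; so
`e_i` grows by at most `d_i (1 - 1/α) Δμ_i` and `β'_i ≤ α β_i + (α - 1) d_i ≤ (2α - 1) max{β_i, d_i}`,
which is at most `α² max{β_i, d_i}`.
-/

lemma ite_div_le_self {p : Prop} [Decidable p] {x α : ℝ} (hx : 0 ≤ x) (hα : 1 ≤ α) :
    (if p then x / α else x) ≤ x := by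
  split_ifs
  · exact div_le_self hx hα
  · exact le_rfl

lemma sub_ite_div_le {p : Prop} [Decidable p] {x y α : ℝ} (hα : 1 ≤ α) (hy : 0 ≤ y)
    (hxy : p → x ≤ y) : x - (if p then x / α else x) ≤ (1 - α⁻¹) * y := by
  have hα' : 0 ≤ 1 - α⁻¹ := sub_nonneg.mpr (inv_le_one_of_one_le₀ hα)
  split_ifs with hp
  · calc x - x / α = (1 - α⁻¹) * x := by ring
      _ ≤ (1 - α⁻¹) * y := mul_le_mul_of_nonneg_left (hxy hp) hα'
  · simpa using mul_nonneg hα' hy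

lemma mul_add_sub_one_mul_le_sq_mul_max {α β d : ℝ} (hα : 1 ≤ α) (hd : 0 ≤ d) :
    α * β + (α - 1) * d ≤ α ^ 2 * max β d := by
  have hβM : β ≤ max β d := le_max_left β d
  have hdM : d ≤ max β d := le_max_right β d
  nlinarith [sq_nonneg (α - 1)]

lemma div_div_le_sq_mul_max_of_le_add {e e' D d α : ℝ} (hD : 0 < D) (hα : 1 ≤ α) (hd : 0 ≤ d)
    (he : e' ≤ e + d * ((1 - α⁻¹) * D)) : e' / (D / α) ≤ α ^ 2 * max (e / D) d := by
  have hα0 : 0 < α := by linarith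
  calc e' / (D / α) = α * (e' / D) := by field_simp
    _ ≤ α * ((e + d * ((1 - α⁻¹) * D)) / D) := by gcongr
    _ = α * (e / D) + (α - 1) * d := by field_simp
    _ ≤ α ^ 2 * max (e / D) d := mul_add_sub_one_mul_le_sq_mul_max hα hd

lemma div_le_sq_mul_max_of_le {e e' D d α : ℝ} (hD : 0 < D) (hα : 1 ≤ α) (hd : 0 ≤ d)
    (he : e' ≤ e) : e' / D ≤ α ^ 2 * max (e / D) d :=
  calc e' / D ≤ max (e / D) d := (div_le_div_of_nonneg_right he hD.le).trans (le_max_left _ _)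
    _ ≤ α ^ 2 * max (e / D) d := le_mul_of_one_le_left (hd.trans (le_max_right _ _)) (one_le_pow₀ hα)

lemma card_filter_fst_eq_le_deg {V : Type*} [DecidableEq V] (E : Finset (V × V)) (i : V) :
    (E.filter (fun a => a.1 = i)).card ≤ deg E i :=
  Finset.card_le_card fun _ ha => by
    simp only [Finset.mem_filter] at ha ⊢
    exact ⟨ha.1, Or.inl ha.2⟩

lemma excess_le_add_deg_mul {V : Type*} [Fintype V] [DecidableEq V] {E : Finset (V × V)}
    {γ : V × V → ℝ} (b : V → ℝ) {f f' : V × V → ℝ} {i : V} {c : ℝ}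
    (hin : ∀ a ∈ E, a.2 = i → γ a * f' a ≤ γ a * f a) (hc : 0 ≤ c)
    (hout : ∀ a ∈ E, a.1 = i → f a - f' a ≤ c) :
    excess E γ b f' i ≤ excess E γ b f i + deg E i * c := by
  have hinflow : ∑ a ∈ E.filter (fun a => a.2 = i), γ a * f' a
      ≤ ∑ a ∈ E.filter (fun a => a.2 = i), γ a * f a :=
    Finset.sum_le_sum fun a ha => hin a (Finset.mem_filter.mp ha).1 (Finset.mem_filter.mp ha).2
  have houtflow : ∑ a ∈ E.filter (fun a => a.1 = i), f a
      - ∑ a ∈ E.filter (fun a => a.1 = i), f' a ≤ deg E i * c := by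
    rw [← Finset.sum_sub_distrib]
    calc ∑ a ∈ E.filter (fun a => a.1 = i), (f a - f' a)
        ≤ (E.filter (fun a => a.1 = i)).card • c :=
          Finset.sum_le_card_nsmul _ _ _ fun a ha =>
            hout a (Finset.mem_filter.mp ha).1 (Finset.mem_filter.mp ha).2
      _ ≤ deg E i * c := by
          rw [nsmul_eq_mul]
          exact mul_le_mul_of_nonneg_right (by exact_mod_cast card_filter_fst_eq_le_deg E i) hc
  unfold excess
  linarith

/-- after an Elementary Step with multiplier α (divide Δ by α,
multiply μ on T by α, divide the flow by α on non-tight arcs within V∖T and on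
arcs entering T), the quantity β_i = e_i/(Δμ_i) satisfies
β'_i ≤ α² max{β_i, d_i} at every node i ≠ t. -/
theorem beta_growth_bound {V : Type*} [Fintype V] [DecidableEq V]
    (E : Finset (V × V)) (γ : V × V → ℝ) (b : V → ℝ) (t : V)
    (T : Finset V) (f f' : V × V → ℝ) (μ μ' : V → ℝ) (Δ Δ' α : ℝ)
    (hγ : ∀ a ∈ E, 0 < γ a)
    (hf0 : ∀ a, 0 ≤ f a)
    (hμpos : ∀ i, 0 < μ i)
    (hΔ : 0 < Δ) (hα : 1 ≤ α)
    -- flow bounds guaranteed by Δ-feasibility and the Elementary Step hypotheses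
    (hnt : ∀ a ∈ E, γ a * μ a.1 < μ a.2 → f a ≤ Δ * μ a.1)
    (hent : ∀ a ∈ E, a.1 ∉ T → a.2 ∈ T → f a ≤ Δ * μ a.1)
    -- the updates performed by the Elementary Step
    (hΔ' : Δ' = Δ / α)
    (hμ' : ∀ i, μ' i = if i ∈ T then α * μ i else μ i)
    (hf' : ∀ a : V × V, f' a =
        if (a.1 ∉ T ∧ a.2 ∉ T ∧ γ a * μ a.1 < μ a.2) ∨ (a.1 ∉ T ∧ a.2 ∈ T)
        then f a / α else f a) :
    ∀ i, i ≠ t →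
      excess E γ b f' i / (Δ' * μ' i)
        ≤ α ^ 2 * max (excess E γ b f i / (Δ * μ i)) ((deg E i : ℝ)) := by
  intro i _
  have hDμ : 0 < Δ * μ i := mul_pos hΔ (hμpos i)
  have hin : ∀ a ∈ E, a.2 = i → γ a * f' a ≤ γ a * f a := fun a ha _ =>
    mul_le_mul_of_nonneg_left (hf' a ▸ ite_div_le_self (hf0 a) hα) (hγ a ha).le
  by_cases hiT : i ∈ T
  · have hout : ∀ a ∈ E, a.1 = i → f a - f' a ≤ 0 := by
      rintro a - rfl
      rw [hf' a, if_neg (by tauto), sub_self]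
    have he : excess E γ b f' i ≤ excess E γ b f i := by
      simpa using excess_le_add_deg_mul b hin le_rfl hout
    have hden : Δ' * μ' i = Δ * μ i := by
      rw [hΔ', hμ', if_pos hiT]
      field_simp
    rw [hden]
    exact div_le_sq_mul_max_of_le hDμ hα (Nat.cast_nonneg _) he
  · have hout : ∀ a ∈ E, a.1 = i → f a - f' a ≤ (1 - α⁻¹) * (Δ * μ i) := by
      rintro a ha rfl
      rw [hf' a]
      refine sub_ite_div_le hα hDμ.le ?_
      rintro (⟨-, -, htight⟩ | ⟨h1, h2⟩)
      exacts [hnt a ha htight, hent a ha h1 h2]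
    have he := excess_le_add_deg_mul b hin
      (mul_nonneg (sub_nonneg.mpr (inv_le_one_of_one_le₀ hα)) hDμ.le) hout
    have hden : Δ' * μ' i = Δ * μ i / α := by
      rw [hΔ', hμ', if_neg hiT]
      ring
    rw [hden]
    exact div_div_le_sq_mul_max_of_le_add hDμ hα (Nat.cast_nonneg _) he
end

section
/- Suppose a solution y of the Farkas system for infeasibility of the equality system (LP2M) exists: y_i − γ_{ij} y_j ≥ 0 for every arc ij ∈ E and Σ_i b_i y_i > 0. Define y⁺ = max(y, 0) and y⁻ = min(y, 0) componentwise. Then y⁺ and y⁻ each satisfy y^±_i − γ_{ij} y^±_j ≥ 0 for every arc ij ∈ E, and at least one of Σ_i b_i y⁺_i > 0 or Σ_i b_i y⁻_i > 0 holds. Consequently, if the inequality systems (LP2M_≥) and (LP2M_≤) are both feasible, then (LP2M) is feasible. -/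
/-!
Scaling by `c ≥ 0` commutes with `max · 0` and `min · 0`, and both are monotone, so an arc
inequality `c * y j ≤ y i` survives truncation to either sign. Since `y = y⁺ + y⁻`, one of the
truncations keeps a positive objective. Pairing a potential `z` with the net flow of `f` gives
`∑ a ∈ E, (γ a * z a.2 - z a.1) * f a - b ⬝ z`, which is negative for a certificate `z` and
`f ≥ 0`; but `y⁺ ≥ 0` pairs nonnegatively with a solution of (LP2M_≥), and `y⁻ ≤ 0` with one of
(LP2M_≤).
-/

/-- Net inflow minus demand at node `i` (the quantity required to be `= b_i`,
`≥ b_i`, or `≤ b_i` in (LP2M), (LP2M_≥), (LP2M_≤), here shifted by `b`). -/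
def netFlow {V : Type*} [Fintype V] [DecidableEq V] (E : Finset (V × V))
    (γ : V × V → ℝ) (b : V → ℝ) (f : V × V → ℝ) (i : V) : ℝ :=
  (∑ a ∈ E.filter (fun a => a.2 = i), γ a * f a)
    - (∑ a ∈ E.filter (fun a => a.1 = i), f a) - b i

section Truncation

variable {R : Type*} [Semiring R] [LinearOrder R] [PosMulMono R] {c x y : R}

lemma mul_max_zero_le_max_zero (hc : 0 ≤ c) (h : c * y ≤ x) : c * max y 0 ≤ max x 0 := by
  rw [mul_max_of_nonneg _ _ hc, mul_zero]
  exact max_le_max_right 0 h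

lemma mul_min_zero_le_min_zero (hc : 0 ≤ c) (h : c * y ≤ x) : c * min y 0 ≤ min x 0 := by
  rw [mul_min_of_nonneg _ _ hc, mul_zero]
  exact min_le_min_right 0 h

end Truncation

lemma Finset.sum_mul_sum_fiber {ι κ M : Type*} [Fintype κ] [DecidableEq κ]
    [NonUnitalNonAssocSemiring M] (s : Finset ι) (p : ι → κ) (z : κ → M) (w : ι → M) :
    ∑ k, z k * ∑ a ∈ s with p a = k, w a = ∑ a ∈ s, z (p a) * w a := by
  rw [← Finset.sum_fiberwise s p]
  refine Finset.sum_congr rfl fun k _ => ?_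
  rw [Finset.mul_sum]
  exact Finset.sum_congr rfl fun a ha => by rw [(Finset.mem_filter.1 ha).2]

section NetFlow

variable {V : Type*} [Fintype V] [DecidableEq V] (E : Finset (V × V)) (γ : V × V → ℝ)
  (b : V → ℝ)

lemma sum_mul_netFlow (f : V × V → ℝ) (z : V → ℝ) :
    ∑ i, z i * netFlow E γ b f i
      = ∑ a ∈ E, (γ a * z a.2 - z a.1) * f a - ∑ i, b i * z i := by
  have hin := Finset.sum_mul_sum_fiber E Prod.snd z (fun a => γ a * f a)
  have hout := Finset.sum_mul_sum_fiber E Prod.fst z f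
  simp only [netFlow, mul_sub, Finset.sum_sub_distrib, hin, hout]
  congr 1
  · rw [← Finset.sum_sub_distrib]
    exact Finset.sum_congr rfl fun a _ => by ring
  · exact Finset.sum_congr rfl fun i _ => mul_comm _ _

lemma sum_mul_netFlow_neg {z : V → ℝ} (hz : ∀ a ∈ E, γ a * z a.2 ≤ z a.1)
    (hobj : 0 < ∑ i, b i * z i) {f : V × V → ℝ} (hf : ∀ a, 0 ≤ f a) :
    ∑ i, z i * netFlow E γ b f i < 0 := by
  have harcs : ∑ a ∈ E, (γ a * z a.2 - z a.1) * f a ≤ 0 :=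
    Finset.sum_nonpos fun a ha => mul_nonpos_of_nonpos_of_nonneg (by linarith [hz a ha]) (hf a)
  rw [sum_mul_netFlow]
  linarith

end NetFlow

lemma sum_mul_max_zero_add_sum_mul_min_zero {V : Type*} [Fintype V] (b y : V → ℝ) :
    ∑ i, b i * max (y i) 0 + ∑ i, b i * min (y i) 0 = ∑ i, b i * y i := by
  rw [← Finset.sum_add_distrib]
  refine Finset.sum_congr rfl fun i _ => ?_
  rw [← mul_add, max_add_min, add_zero]

/-- Farkas certificate truncation. If y certifies infeasibility of
the equality system (LP2M), then its positive part y⁺ and negative part y⁻ both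
satisfy the arc inequalities, and at least one of them has positive objective;
consequently, if (LP2M_≥) and (LP2M_≤) are both feasible, then (LP2M) is
feasible. -/
theorem farkas_truncation {V : Type*} [Fintype V] [DecidableEq V]
    (E : Finset (V × V)) (γ : V × V → ℝ) (b : V → ℝ)
    (hγ : ∀ a ∈ E, 0 < γ a)
    (y : V → ℝ)
    (hy : ∀ a ∈ E, 0 ≤ y a.1 - γ a * y a.2)
    (hobj : 0 < ∑ i, b i * y i) :
    (∀ a ∈ E, 0 ≤ max (y a.1) 0 - γ a * max (y a.2) 0) ∧
    (∀ a ∈ E, 0 ≤ min (y a.1) 0 - γ a * min (y a.2) 0) ∧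
    ((0 < ∑ i, b i * max (y i) 0) ∨ (0 < ∑ i, b i * min (y i) 0)) ∧
    (((∃ f : V × V → ℝ, (∀ a, 0 ≤ f a) ∧ ∀ i, 0 ≤ netFlow E γ b f i) ∧
      (∃ g : V × V → ℝ, (∀ a, 0 ≤ g a) ∧ ∀ i, netFlow E γ b g i ≤ 0)) →
      ∃ h : V × V → ℝ, (∀ a, 0 ≤ h a) ∧ ∀ i, netFlow E γ b h i = 0) := by
  have harc : ∀ a ∈ E, γ a * y a.2 ≤ y a.1 := fun a ha => sub_nonneg.1 (hy a ha)
  have hpos : ∀ a ∈ E, γ a * max (y a.2) 0 ≤ max (y a.1) 0 := fun a ha =>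
    mul_max_zero_le_max_zero (hγ a ha).le (harc a ha)
  have hneg : ∀ a ∈ E, γ a * min (y a.2) 0 ≤ min (y a.1) 0 := fun a ha =>
    mul_min_zero_le_min_zero (hγ a ha).le (harc a ha)
  have hsplit : (0 < ∑ i, b i * max (y i) 0) ∨ (0 < ∑ i, b i * min (y i) 0) := by
    by_contra! hc
    linarith [sum_mul_max_zero_add_sum_mul_min_zero b y]
  refine ⟨fun a ha => sub_nonneg.2 (hpos a ha), fun a ha => sub_nonneg.2 (hneg a ha), hsplit, ?_⟩
  rintro ⟨⟨f, hf, hfin⟩, g, hg, hgout⟩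
  exfalso
  rcases hsplit with hobj' | hobj'
  · exact (sum_mul_netFlow_neg E γ b hpos hobj' hf).not_ge <|
      Finset.sum_nonneg fun i _ => mul_nonneg (le_max_right _ _) (hfin i)
  · exact (sum_mul_netFlow_neg E γ b hneg hobj' hg).not_ge <|
      Finset.sum_nonneg fun i _ => mul_nonneg_of_nonpos_of_nonpos (min_le_right _ _) (hgout i)
end

section
/- In the uncapacitated generalized flow problem, suppose at some iteration the pair (f, μ) is Δ-feasible, f has no abundant arcs (f^μ_e < 17mΔ for every arc e incident to node i), and e^μ_i ≤ (4d_i + 8)Δ. Then |b^μ_i| < 32mnΔ, where b^μ_i = b_i/μ_i and d_i ≤ n − 1 is the degree of i. -/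
def inflow {V : Type*} [DecidableEq V] (E : Finset (V × V)) (γ f : V × V → ℝ) (i : V) : ℝ :=
  ∑ a ∈ E.filter (fun a => a.2 = i), γ a * f a

def outflow {V : Type*} [DecidableEq V] (E : Finset (V × V)) (f : V × V → ℝ) (i : V) : ℝ :=
  ∑ a ∈ E.filter (fun a => a.1 = i), f a

theorem mul_le_mul_div_of_dual {V : Type*} {γ f : V × V → ℝ} {μ : V → ℝ} {a : V × V}
    (hμ : 0 < μ a.1) (hf : 0 ≤ f a) (hdual : γ a * μ a.1 ≤ μ a.2) :
    γ a * f a ≤ μ a.2 * (f a / μ a.1) :=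
  calc γ a * f a = γ a * μ a.1 * (f a / μ a.1) := by field_simp
    _ ≤ μ a.2 * (f a / μ a.1) := by gcongr

section Flow

variable {V : Type*} [DecidableEq V] (E : Finset (V × V)) (γ f : V × V → ℝ) (i : V)

theorem excess_eq_inflow_sub_outflow [Fintype V] (b : V → ℝ) :
    excess E γ b f i = inflow E γ f i - outflow E f i - b i :=
  rfl

theorem card_filter_le_deg (p : V × V → Prop) [DecidablePred p]
    (hp : ∀ a ∈ E, p a → a.1 = i ∨ a.2 = i) : (E.filter p).card ≤ deg E i := by
  refine Finset.card_le_card fun a ha => ?_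
  rw [Finset.mem_filter] at ha ⊢
  exact ⟨ha.1, hp a ha.1 ha.2⟩

theorem inflow_nonneg (hγ : ∀ a ∈ E, 0 ≤ γ a) (hf : ∀ a, 0 ≤ f a) : 0 ≤ inflow E γ f i :=
  Finset.sum_nonneg fun a ha => mul_nonneg (hγ a (Finset.mem_filter.mp ha).1) (hf a)

theorem outflow_nonneg (hf : ∀ a, 0 ≤ f a) : 0 ≤ outflow E f i :=
  Finset.sum_nonneg fun a _ => hf a

variable {E γ f i} {μ : V → ℝ} {K : ℝ}

theorem inflow_le_deg_mul (hμ : ∀ j, 0 < μ j) (hf : ∀ a, 0 ≤ f a)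
    (hdual : ∀ a ∈ E, γ a * μ a.1 ≤ μ a.2) (hK : ∀ a ∈ E, a.2 = i → f a / μ a.1 ≤ K)
    (hK0 : 0 ≤ K) : inflow E γ f i ≤ deg E i * K * μ i := by
  have harc : ∀ a ∈ E.filter (fun a => a.2 = i), γ a * f a ≤ K * μ i := fun a ha => by
    obtain ⟨haE, rfl⟩ := Finset.mem_filter.mp ha
    calc γ a * f a ≤ μ a.2 * (f a / μ a.1) := mul_le_mul_div_of_dual (hμ _) (hf a) (hdual a haE)
      _ ≤ K * μ a.2 := (mul_le_mul_of_nonneg_left (hK a haE rfl) (hμ _).le).trans_eq (mul_comm _ _)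
  calc inflow E γ f i ≤ (E.filter (fun a => a.2 = i)).card * (K * μ i) :=
        (Finset.sum_le_card_nsmul _ _ _ harc).trans_eq (nsmul_eq_mul _ _)
    _ ≤ deg E i * (K * μ i) := mul_le_mul_of_nonneg_right
        (mod_cast card_filter_le_deg E i _ fun _ _ h => Or.inr h) (mul_nonneg hK0 (hμ i).le)
    _ = deg E i * K * μ i := (mul_assoc _ _ _).symm

theorem outflow_le_deg_mul (hμ : 0 < μ i) (hK : ∀ a ∈ E, a.1 = i → f a / μ a.1 ≤ K)
    (hK0 : 0 ≤ K) : outflow E f i ≤ deg E i * K * μ i := by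
  have harc : ∀ a ∈ E.filter (fun a => a.1 = i), f a ≤ K * μ i := fun a ha => by
    obtain ⟨haE, rfl⟩ := Finset.mem_filter.mp ha
    exact (div_le_iff₀ hμ).mp (hK a haE rfl)
  calc outflow E f i ≤ (E.filter (fun a => a.1 = i)).card * (K * μ i) :=
        (Finset.sum_le_card_nsmul _ _ _ harc).trans_eq (nsmul_eq_mul _ _)
    _ ≤ deg E i * (K * μ i) := mul_le_mul_of_nonneg_right
        (mod_cast card_filter_le_deg E i _ fun _ _ h => Or.inl h) (mul_nonneg hK0 hμ.le)
    _ = deg E i * K * μ i := (mul_assoc _ _ _).symm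

end Flow

theorem abs_lt_of_demand_bounds {β d m n Δ : ℝ} (hΔ : 0 < Δ) (hd0 : 0 ≤ d) (hd : d ≤ n - 1)
    (hnm : n ≤ m) (hβ : β ≤ d * (17 * m * Δ))
    (hβneg : -β ≤ (4 * d + 8) * Δ + d * (17 * m * Δ)) : |β| < 32 * m * n * Δ := by
  have hdm : d * m ≤ (n - 1) * m := by gcongr; linarith
  rw [abs_lt]
  constructor <;> nlinarith

/-- if (f, μ) is Δ-feasible, node i has no abundant incident arc
(all incident arcs have relabeled flow < 17mΔ) and e^μ_i ≤ (4 d_i + 8)Δ, then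
|b^μ_i| < 32 m n Δ. -/
theorem no_abundant_arc_small_demand {V : Type*} [Fintype V] [DecidableEq V]
    (E : Finset (V × V)) (γ : V × V → ℝ) (b : V → ℝ) (t : V)
    (f : V × V → ℝ) (μ : V → ℝ) (Δ : ℝ) (i : V)
    (hΔ : 0 < Δ)
    (hγ : ∀ a ∈ E, 0 < γ a)
    (hf0 : ∀ a, 0 ≤ f a)
    (hnm : Fintype.card V ≤ E.card)
    (hd : (deg E i : ℝ) ≤ (Fintype.card V : ℝ) - 1)
    -- components of Δ-feasibility used:
    (hμt : μ t = 1) (hμpos : ∀ j, j ≠ t → 0 < μ j)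
    (hdual : ∀ a ∈ E, γ a * μ a.1 ≤ μ a.2)
    (hex0 : 0 ≤ excess E γ b f i)
    -- no abundant arc incident to i:
    (habsent : ∀ a ∈ E, (a.1 = i ∨ a.2 = i) → f a / μ a.1 < 17 * (E.card : ℝ) * Δ)
    -- bound on the relabeled excess of i:
    (hupper : excess E γ b f i / μ i ≤ (4 * (deg E i : ℝ) + 8) * Δ) :
    |b i / μ i| < 32 * (E.card : ℝ) * (Fintype.card V : ℝ) * Δ := by
  have hμ : ∀ j, 0 < μ j := fun j => by
    rcases eq_or_ne j t with rfl | hj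
    exacts [hμt ▸ one_pos, hμpos j hj]
  have hK0 : 0 ≤ 17 * (E.card : ℝ) * Δ := by positivity
  have hin := inflow_le_deg_mul hμ hf0 hdual (fun a ha h => (habsent a ha (Or.inr h)).le) hK0
  have hout := outflow_le_deg_mul (hμ i) (fun a ha h => (habsent a ha (Or.inl h)).le) hK0
  have hin0 := inflow_nonneg E γ f i (fun a ha => (hγ a ha).le) hf0
  have hout0 := outflow_nonneg E f i hf0
  rw [excess_eq_inflow_sub_outflow] at hex0 hupper
  rw [div_le_iff₀ (hμ i)] at hupper
  refine abs_lt_of_demand_bounds hΔ (Nat.cast_nonneg _) hd (Nat.cast_le.mpr hnm) ?_ ?_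
  · rw [div_le_iff₀ (hμ i)]
    linarith
  · rw [← neg_div, div_le_iff₀ (hμ i)]
    linarith
end

section
/- Let μ be a feasible labeling on a node set S containing t, and let x be a maximum s–t flow in the auxiliary network on S ∪ {s} consisting of the tight arcs {ij ∈ E[S] : γ^μ_{ij} = 1} with capacities [0, ∞), plus arcs si for each i ∈ S − t with capacities (−∞, −b^μ_i]. Define f'_{ij} = x_{ij} μ_i on tight arcs and 0 otherwise. If the flow problem is feasible, then f' is a feasible generalized flow on S (e_i(f') ≥ 0 for i ∈ S − t) and e^μ_i(f') ≤ n · max_{j ∈ S − t} |b^μ_j| for every i ∈ S. -/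
open Finset Filter Topology Relation

section FlowNetwork

variable {V : Type*} [DecidableEq V]

def netOutflow (A : Finset (V × V)) (x : V × V → ℝ) (i : V) : ℝ :=
  ∑ a ∈ A with a.1 = i, x a - ∑ a ∈ A with a.2 = i, x a

section netOutflow

variable (A : Finset (V × V))

@[simp]
lemma netOutflow_zero : netOutflow A 0 = 0 := by
  ext; simp [netOutflow]

lemma netOutflow_add (x y : V × V → ℝ) :
    netOutflow A (x + y) = netOutflow A x + netOutflow A y := by
  ext i; simp only [netOutflow, Pi.add_apply, sum_add_distrib]; ring

lemma netOutflow_sub (x y : V × V → ℝ) :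
    netOutflow A (x - y) = netOutflow A x - netOutflow A y := by
  ext i; simp only [netOutflow, Pi.sub_apply, sum_sub_distrib]; ring

lemma netOutflow_smul (c : ℝ) (x : V × V → ℝ) : netOutflow A (c • x) = c • netOutflow A x := by
  ext i; simp only [netOutflow, Pi.smul_apply, smul_eq_mul, ← mul_sum, mul_sub]

lemma netOutflow_single {a : V × V} (ha : a ∈ A) :
    netOutflow A (Pi.single a 1) = Pi.single a.1 1 - Pi.single a.2 1 := by
  ext i; simp [netOutflow, ha, Pi.single_apply, eq_comm]

lemma sum_netOutflow (x : V × V → ℝ) (Z : Finset V) :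
    ∑ i ∈ Z, netOutflow A x i = ∑ a ∈ A with a.1 ∈ Z, x a - ∑ a ∈ A with a.2 ∈ Z, x a := by
  simp only [netOutflow, sum_sub_distrib, sum_fiberwise_eq_sum_filter]

lemma sum_netOutflow_eq_zero {S : Finset V} (hA : ∀ a ∈ A, a.1 ∈ S ∧ a.2 ∈ S) (x : V × V → ℝ) :
    ∑ i ∈ S, netOutflow A x i = 0 := by
  rw [sum_netOutflow, filter_true_of_mem fun a ha => (hA a ha).1,
    filter_true_of_mem fun a ha => (hA a ha).2, sub_self]

lemma sum_netOutflow_nonneg {x : V × V → ℝ} {Z : Finset V} (hx : ∀ a ∈ A, 0 ≤ x a)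
    (hZ : ∀ a ∈ A, a.1 ∉ Z → a.2 ∈ Z → x a = 0) :
    0 ≤ ∑ i ∈ Z, netOutflow A x i := by
  have hin : ∑ a ∈ A with a.2 ∈ Z, x a = ∑ a ∈ A with a.2 ∈ Z ∧ a.1 ∈ Z, x a := by
    rw [← filter_filter, ← sum_filter_add_sum_filter_not _ (fun a => a.1 ∈ Z), add_eq_left]
    exact sum_eq_zero fun a ha => by simp only [mem_filter] at ha; exact hZ a ha.1.1 ha.2 ha.1.2
  rw [sum_netOutflow, hin, sub_nonneg]
  exact sum_le_sum_of_subset_of_nonneg (by intro a; simp +contextual)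
    fun a ha _ => hx a (mem_filter.1 ha).1

end netOutflow

lemma excess_eq_neg_mul_netOutflow [Fintype V] {E A : Finset (V × V)} {γ : V × V → ℝ}
    {μ : V → ℝ} (hAE : A ⊆ E) (htight : ∀ a ∈ A, γ a * μ a.1 = μ a.2) (b : V → ℝ)
    {x f : V × V → ℝ} (hf : ∀ a, f a = if a ∈ A then x a * μ a.1 else 0) (i : V) :
    excess E γ b f i = -μ i * netOutflow A x i - b i := by
  have hrestrict (p : V × V → Prop) [DecidablePred p] : E.filter p ∩ A = A.filter p := by
    rw [filter_inter, inter_eq_right.2 hAE]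
  have hin : ∑ a ∈ E with a.2 = i, γ a * f a = μ i * ∑ a ∈ A with a.2 = i, x a := by
    simp_rw [hf, mul_ite, mul_zero]
    rw [sum_ite_mem, hrestrict, mul_sum]
    refine sum_congr rfl fun a ha => ?_
    rw [← mul_assoc, mul_comm (γ a), mul_assoc, htight a (mem_filter.1 ha).1,
      (mem_filter.1 ha).2, mul_comm]
  have hout : ∑ a ∈ E with a.1 = i, f a = μ i * ∑ a ∈ A with a.1 = i, x a := by
    simp_rw [hf]
    rw [sum_ite_mem, hrestrict, mul_sum]
    exact sum_congr rfl fun a ha => by rw [(mem_filter.1 ha).2, mul_comm]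
  rw [excess, hin, hout, netOutflow]
  ring

lemma eventually_nonneg_add_mul {ι : Type*} {s : Finset ι} {x g : ι → ℝ}
    (hx : ∀ a ∈ s, 0 ≤ x a) (hg : ∀ a ∈ s, g a < 0 → 0 < x a) :
    ∀ᶠ δ in 𝓝[>] 0, ∀ a ∈ s, 0 ≤ x a + δ * g a := by
  rw [eventually_all_finset]
  intro a ha
  rcases lt_or_ge (g a) 0 with hneg | hpos
  · have hcont : Continuous fun δ : ℝ => x a + δ * g a := by fun_prop
    have hlim := (hcont.tendsto' 0 (x a) (by simp)).mono_left (nhdsWithin_le_nhds (s := Set.Ioi 0))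
    exact (hlim.eventually_const_lt (hg a ha hneg)).mono fun _ => le_of_lt
  · filter_upwards [self_mem_nhdsWithin] with δ hδ
    exact add_nonneg (hx a ha) (mul_nonneg (le_of_lt hδ) hpos)

/-- Arcs of `A` have capacity `[0, ∞)`, so they are always residual; the reverse of an arc is
residual when the arc carries positive flow. -/
def residualAdj (A : Finset (V × V)) (x : V × V → ℝ) (u v : V) : Prop :=
  (u, v) ∈ A ∨ ((v, u) ∈ A ∧ 0 < x (v, u))

lemma exists_pathFlow_of_reflTransGen {A : Finset (V × V)} {x : V × V → ℝ} {u t : V}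
    (h : ReflTransGen (residualAdj A x) u t) :
    ∃ g : V × V → ℝ, (∀ a ∉ A, g a = 0) ∧ (∀ a, g a < 0 → 0 < x a) ∧
      netOutflow A g = Pi.single u 1 - Pi.single t 1 := by
  induction h using ReflTransGen.head_induction_on with
  | refl => exact ⟨0, fun _ _ => rfl, fun _ h => absurd h (lt_irrefl 0), by simp⟩
  | @head u v hstep _ ih =>
    obtain ⟨g, hgA, hgx, hgnet⟩ := ih
    rcases hstep with hfwd | ⟨hbwd, hpos⟩
    · refine ⟨Pi.single (u, v) 1 + g, fun a ha => ?_, fun a ha => hgx a ?_, ?_⟩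
      · simp [hgA a ha, (ne_of_mem_of_not_mem hfwd ha).symm]
      · have hsingle := (Pi.single_nonneg.2 zero_le_one : (0 : V × V → ℝ) ≤ Pi.single (u, v) 1) a
        simp only [Pi.add_apply, Pi.zero_apply] at ha hsingle
        linarith
      · rw [netOutflow_add, netOutflow_single _ hfwd, hgnet]
        abel
    · refine ⟨g - Pi.single (v, u) 1, fun a ha => ?_, fun a ha => ?_, ?_⟩
      · simp [hgA a ha, (ne_of_mem_of_not_mem hbwd ha).symm]
      · by_cases hav : a = (v, u)
        · exact hav ▸ hpos
        · simp only [Pi.sub_apply, Pi.single_apply, hav, if_false, sub_zero] at ha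
          exact hgx a ha
      · rw [netOutflow_sub, netOutflow_single _ hbwd, hgnet]
        abel

/-- `(x, xs)` is a flow in the auxiliary network on `S ∪ {s}` with sink `t`: `x` lives on the
arcs `A` with capacities `[0, ∞)`, and `xs i` is the flow on the extra arc `s → i`, of capacity
`(-∞, cap i]`. -/
structure IsAuxFlow (A : Finset (V × V)) (S : Finset V) (t : V) (cap : V → ℝ)
    (x : V × V → ℝ) (xs : V → ℝ) : Prop where
  nonneg : ∀ a ∈ A, 0 ≤ x a
  support : ∀ a ∉ A, x a = 0
  le_cap : ∀ i ∈ S, i ≠ t → xs i ≤ cap i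
  conservation : ∀ i ∈ S, i ≠ t → xs i = netOutflow A x i

def IsMaxAuxFlow (A : Finset (V × V)) (S : Finset V) (t : V) (cap : V → ℝ)
    (x : V × V → ℝ) (xs : V → ℝ) : Prop :=
  IsAuxFlow A S t cap x xs ∧ ∀ x' xs', IsAuxFlow A S t cap x' xs' →
    ∑ i ∈ S.erase t, xs' i ≤ ∑ i ∈ S.erase t, xs i

variable {A : Finset (V × V)} {S : Finset V} {t : V} {cap : V → ℝ} {x : V × V → ℝ} {xs : V → ℝ}

lemma IsAuxFlow.sum_erase_eq_neg_netOutflow (h : IsAuxFlow A S t cap x xs)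
    (hA : ∀ a ∈ A, a.1 ∈ S ∧ a.2 ∈ S) (ht : t ∈ S) :
    ∑ i ∈ S.erase t, xs i = -netOutflow A x t := by
  rw [sum_congr rfl fun i hi => h.conservation i (mem_of_mem_erase hi) (ne_of_mem_erase hi)]
  linarith [add_sum_erase S (netOutflow A x) ht, sum_netOutflow_eq_zero A hA x]

lemma IsAuxFlow.neg_netOutflow_le [Fintype V] {M : ℝ} (h : IsAuxFlow A S t cap x xs)
    (hA : ∀ a ∈ A, a.1 ∈ S ∧ a.2 ∈ S) (ht : t ∈ S) (hcap : ∀ j ∈ S, j ≠ t → cap j ≤ M)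
    (hM : 0 ≤ M) : -netOutflow A x t ≤ Fintype.card V * M := by
  have hxsM : ∀ j ∈ S.erase t, xs j ≤ M := fun j hj =>
    (h.le_cap j (mem_of_mem_erase hj) (ne_of_mem_erase hj)).trans
      (hcap j (mem_of_mem_erase hj) (ne_of_mem_erase hj))
  calc -netOutflow A x t = ∑ i ∈ S.erase t, xs i := (h.sum_erase_eq_neg_netOutflow hA ht).symm
    _ ≤ (S.erase t).card * M := by simpa using sum_le_card_nsmul _ _ _ hxsM
    _ ≤ Fintype.card V * M := by gcongr; exact card_le_univ _

/-- Augmenting along a residual `r`–`t` path. -/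
lemma IsMaxAuxFlow.not_reflTransGen {r : V} (h : IsMaxAuxFlow A S t cap x xs) (hr : r ∈ S)
    (hrt : r ≠ t) (hslack : xs r < cap r) : ¬ ReflTransGen (residualAdj A x) r t := by
  intro hpath
  obtain ⟨g, hgA, hgx, hgnet⟩ := exists_pathFlow_of_reflTransGen hpath
  obtain ⟨δ, hnonneg, hδ, hδslack⟩ :=
    ((eventually_nonneg_add_mul h.1.nonneg fun a _ => hgx a).and
      (Ioo_mem_nhdsGT (sub_pos.2 hslack))).exists
  have haug : IsAuxFlow A S t cap (x + δ • g) (xs + Pi.single r δ) := by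
    refine ⟨hnonneg, fun a ha => by simp [h.1.support a ha, hgA a ha], fun i hi hit => ?_,
      fun i hi hit => ?_⟩
    · rcases eq_or_ne i r with rfl | hir
      · simp only [Pi.add_apply, Pi.single_eq_same]; linarith
      · simpa [hir] using h.1.le_cap i hi hit
    · rw [netOutflow_add, netOutflow_smul, hgnet]
      simp [Pi.single_apply, hit, h.1.conservation i hi hit]
  have hsum := h.2 _ _ haug
  simp only [Pi.add_apply] at hsum
  rw [sum_add_distrib, sum_pi_single', if_pos (mem_erase.2 ⟨hrt, hr⟩)] at hsum
  linarith

/-- The nodes reachable from `r` in the residual graph avoid `t`, and no flow enters them. -/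
lemma IsMaxAuxFlow.exists_cut {r : V} (h : IsMaxAuxFlow A S t cap x xs)
    (hA : ∀ a ∈ A, a.1 ∈ S ∧ a.2 ∈ S) (hr : r ∈ S) (hrt : r ≠ t) (hslack : xs r < cap r) :
    ∃ Z ⊆ S.erase t, r ∈ Z ∧ 0 ≤ ∑ i ∈ Z, xs i := by
  classical
  set Z := S.filter (ReflTransGen (residualAdj A x) r)
  have hZ : Z ⊆ S.erase t := fun v hv => by
    rw [mem_filter] at hv
    exact mem_erase.2 ⟨by rintro rfl; exact h.not_reflTransGen hr hrt hslack hv.2, hv.1⟩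
  refine ⟨Z, hZ, mem_filter.2 ⟨hr, ReflTransGen.refl⟩, ?_⟩
  rw [sum_congr rfl fun i hi => h.1.conservation i (mem_of_mem_erase (hZ hi))
    (ne_of_mem_erase (hZ hi))]
  refine sum_netOutflow_nonneg A h.1.nonneg fun a ha ha1 ha2 => ?_
  by_contra hne
  rw [mem_filter] at ha2
  exact ha1 (mem_filter.2 ⟨(hA a ha).1,
    ha2.2.tail (Or.inr ⟨ha, (h.1.nonneg a ha).lt_of_ne' hne⟩)⟩)

lemma IsMaxAuxFlow.cap_sub_le [Fintype V] {M : ℝ} {i : V} (h : IsMaxAuxFlow A S t cap x xs)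
    (hA : ∀ a ∈ A, a.1 ∈ S ∧ a.2 ∈ S) (hcap : ∀ j ∈ S, j ≠ t → cap j ≤ M)
    (hM : 0 ≤ M) (hi : i ∈ S) (hit : i ≠ t) : cap i - xs i ≤ Fintype.card V * M := by
  rcases (h.1.le_cap i hi hit).lt_or_eq with hslack | hsat
  · obtain ⟨Z, hZ, hiZ, hsum⟩ := h.exists_cut hA hi hit hslack
    have hxsM : ∀ j ∈ Z.erase i, xs j ≤ M := fun j hj => by
      have hj' := hZ (mem_of_mem_erase hj)
      exact (h.1.le_cap j (mem_of_mem_erase hj') (ne_of_mem_erase hj')).trans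
        (hcap j (mem_of_mem_erase hj') (ne_of_mem_erase hj'))
    calc cap i - xs i ≤ cap i + ∑ j ∈ Z.erase i, xs j := by linarith [add_sum_erase Z xs hiZ]
      _ ≤ M + (Z.erase i).card * M := by
        gcongr
        · exact hcap i hi hit
        · simpa using sum_le_card_nsmul _ _ _ hxsM
      _ = Z.card * M := by rw [← card_erase_add_one hiZ]; push_cast; ring
      _ ≤ Fintype.card V * M := by gcongr; exact card_le_univ Z
  · rw [hsat, sub_self]
    positivity

end FlowNetwork

theorem tight_flow_properties_general {V : Type*} [Fintype V] [DecidableEq V]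
    (E : Finset (V × V)) (γ : V × V → ℝ) (b : V → ℝ) (t : V) (S : Finset V)
    (hbt : b t = 0)
    (μ : V → ℝ) (hμt : μ t = 1) (hμpos : ∀ i ∈ S, 0 < μ i)
    -- the set of tight arcs spanned by S
    (Et : Finset (V × V))
    (hEt : Et = E.filter (fun a => a.1 ∈ S ∧ a.2 ∈ S ∧ γ a * μ a.1 = μ a.2))
    -- x, xs is a feasible flow in the auxiliary network
    (x : V × V → ℝ) (xs : V → ℝ)
    (hx0 : ∀ a ∈ Et, 0 ≤ x a) (hxsupp : ∀ a ∉ Et, x a = 0)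
    (hxs : ∀ i ∈ S, i ≠ t → xs i ≤ -(b i / μ i))
    (hconv : ∀ i ∈ S, i ≠ t →
        xs i + (∑ a ∈ Et.filter (fun a => a.2 = i), x a)
          = ∑ a ∈ Et.filter (fun a => a.1 = i), x a)
    -- x, xs is a maximum flow
    (hmax : ∀ (x' : V × V → ℝ) (xs' : V → ℝ),
        (∀ a ∈ Et, 0 ≤ x' a) → (∀ a ∉ Et, x' a = 0) →
        (∀ i ∈ S, i ≠ t → xs' i ≤ -(b i / μ i)) →
        (∀ i ∈ S, i ≠ t →
          xs' i + (∑ a ∈ Et.filter (fun a => a.2 = i), x' a)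
            = ∑ a ∈ Et.filter (fun a => a.1 = i), x' a) →
        (∑ i ∈ S.erase t, xs' i) ≤ ∑ i ∈ S.erase t, xs i)
    -- the returned generalized flow
    (f' : V × V → ℝ)
    (hf' : ∀ a : V × V, f' a = if a ∈ Et then x a * μ a.1 else 0) :
    (∀ i ∈ S, i ≠ t → 0 ≤ excess E γ b f' i) ∧
    (∀ M : ℝ, 0 ≤ M → (∀ j ∈ S, j ≠ t → |b j / μ j| ≤ M) →
        ∀ i ∈ S, excess E γ b f' i / μ i ≤ (Fintype.card V : ℝ) * M) := by
  have hflow : IsMaxAuxFlow Et S t (fun i => -(b i / μ i)) x xs :=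
    ⟨⟨hx0, hxsupp, hxs, fun i hi hit => eq_sub_of_add_eq (hconv i hi hit)⟩,
      fun x' xs' h => hmax x' xs' h.nonneg h.support h.le_cap
        fun i hi hit => eq_sub_iff_add_eq.1 (h.conservation i hi hit)⟩
  have hEtS : ∀ a ∈ Et, a.1 ∈ S ∧ a.2 ∈ S := fun a ha => by
    rw [hEt, mem_filter] at ha; exact ⟨ha.2.1, ha.2.2.1⟩
  have hexcess := excess_eq_neg_mul_netOutflow (hEt ▸ filter_subset _ E)
    (fun a ha => by rw [hEt, mem_filter] at ha; exact ha.2.2.2) b hf'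
  have hexcess' : ∀ i ∈ S, i ≠ t → excess E γ b f' i = μ i * (-(b i / μ i) - xs i) :=
    fun i hi hit => by
      rw [hexcess, ← hflow.1.conservation i hi hit]
      field_simp [(hμpos i hi).ne']
      ring
  refine ⟨fun i hi hit => ?_, fun M hM hMb i hi => ?_⟩
  · rw [hexcess' i hi hit]
    exact mul_nonneg (hμpos i hi).le (sub_nonneg.2 (hxs i hi hit))
  have hcapM : ∀ j ∈ S, j ≠ t → -(b j / μ j) ≤ M :=
    fun j hj hjt => (neg_le_abs _).trans (hMb j hj hjt)
  rcases eq_or_ne i t with rfl | hit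
  · rw [hexcess, hμt, hbt, div_one, neg_one_mul, sub_zero]
    exact hflow.1.neg_netOutflow_le hEtS hi hcapM hM
  · rw [hexcess' i hi hit, mul_div_cancel_left₀ _ (hμpos i hi).ne']
    exact hflow.cap_sub_le hEtS hcapM hM hi hit

/-- the Tight-Flow subroutine. Given a feasible labeling μ on a
node set S containing t and a maximum flow x (with source values xs on the
auxiliary arcs s→i of capacity −b^μ_i) on the network of tight arcs, the flow
f' defined by f'_{ij} = x_{ij} μ_i is a feasible generalized flow on S and its
relabeled excesses are bounded by n · max_{j ∈ S−t} |b^μ_j|. -/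
theorem tight_flow_properties {V : Type*} [Fintype V] [DecidableEq V]
    (E : Finset (V × V)) (γ : V × V → ℝ) (b : V → ℝ) (t : V) (S : Finset V)
    (hγ : ∀ a ∈ E, 0 < γ a) (htS : t ∈ S) (hbt : b t = 0)
    (μ : V → ℝ) (hμt : μ t = 1) (hμpos : ∀ i ∈ S, 0 < μ i)
    (hμfeas : ∀ a ∈ E, a.1 ∈ S → a.2 ∈ S → γ a * μ a.1 ≤ μ a.2)
    -- the set of tight arcs spanned by S
    (Et : Finset (V × V))
    (hEt : Et = E.filter (fun a => a.1 ∈ S ∧ a.2 ∈ S ∧ γ a * μ a.1 = μ a.2))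
    -- x, xs is a feasible flow in the auxiliary network
    (x : V × V → ℝ) (xs : V → ℝ)
    (hx0 : ∀ a ∈ Et, 0 ≤ x a) (hxsupp : ∀ a ∉ Et, x a = 0)
    (hxs : ∀ i ∈ S, i ≠ t → xs i ≤ -(b i / μ i))
    (hconv : ∀ i ∈ S, i ≠ t →
        xs i + (∑ a ∈ Et.filter (fun a => a.2 = i), x a)
          = ∑ a ∈ Et.filter (fun a => a.1 = i), x a)
    -- x, xs is a maximum flow
    (hmax : ∀ (x' : V × V → ℝ) (xs' : V → ℝ),
        (∀ a ∈ Et, 0 ≤ x' a) → (∀ a ∉ Et, x' a = 0) →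
        (∀ i ∈ S, i ≠ t → xs' i ≤ -(b i / μ i)) →
        (∀ i ∈ S, i ≠ t →
          xs' i + (∑ a ∈ Et.filter (fun a => a.2 = i), x' a)
            = ∑ a ∈ Et.filter (fun a => a.1 = i), x' a) →
        (∑ i ∈ S.erase t, xs' i) ≤ ∑ i ∈ S.erase t, xs i)
    -- the returned generalized flow
    (f' : V × V → ℝ)
    (hf' : ∀ a : V × V, f' a = if a ∈ Et then x a * μ a.1 else 0) :
    (∀ i ∈ S, i ≠ t → 0 ≤ excess E γ b f' i) ∧
    (∀ M : ℝ, 0 ≤ M → (∀ j ∈ S, j ≠ t → |b j / μ j| ≤ M) →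
        ∀ i ∈ S, excess E γ b f' i / μ i ≤ (Fintype.card V : ℝ) * M) :=
  tight_flow_properties_general E γ b t S hbt μ hμt hμpos Et hEt x xs hx0 hxsupp hxs hconv hmax f'
    hf'
end
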